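/- arXiv:2206.05906 — 10 statements merged into one kernel-verified Lean document; each statement's English description precedes it below -/
import Mathlib

section
/- Let B be an integral domain containing a field k of characteristic zero, and let D be a nonzero locally nilpotent k-derivation on B (i.e., for every b ∈ B there exists n with D^n(b) = 0). Then the kernel A = ker(D) is factorially closed in B: if a, b ∈ B are nonzero and a·b ∈ A, then a ∈ A and b ∈ A. -/
/-!
A locally nilpotent `D` gives every nonzero `b` a degree, the largest `m` with `D^m b ≠ 0`.
In the Leibniz expansion of `D^(m+n) (a * b)`, with `m`, `n` the degrees of `a`, `b`, only the
term `(m+n).choose m • (D^m a * D^n b)` survives, and over a domain of characteristic zero it is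
nonzero; so the degree is additive. If `D (a * b) = 0` then `a * b` has degree `0`, hence so do
`a` and `b`.
-/

/-- A derivation is locally nilpotent if every element is killed by some iterate. -/
def IsLND {k B : Type*} [CommRing k] [CommRing B] [Algebra k B]
    (D : Derivation k B B) : Prop :=
  ∀ b : B, ∃ n : ℕ, (⇑D)^[n] b = 0

/-- `ndeg D b n` says that `n` is the `D`-degree of `b`, i.e. the largest `m` with
`D^[m] b ≠ 0`. -/
def ndeg {k B : Type*} [CommRing k] [CommRing B] [Algebra k B]
    (D : Derivation k B B) (b : B) (n : ℕ) : Prop :=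
  (⇑D)^[n] b ≠ 0 ∧ (⇑D)^[n + 1] b = 0

/-- A derivation is irreducible if the ideal generated by its image is not contained
in any proper principal ideal. -/
def IsIrred {k B : Type*} [CommRing k] [CommRing B] [Algebra k B]
    (D : Derivation k B B) : Prop :=
  ∀ b : B, Ideal.span (Set.range (⇑D)) ≤ Ideal.span {b} → IsUnit b

open Finset

section

variable {R A : Type*} [CommRing R] [CommRing A] [Algebra R A] (D : Derivation R A A)

theorem Derivation.iterate_apply_mul (n : ℕ) (a b : A) :
    (⇑D)^[n] (a * b) =
      ∑ ij ∈ antidiagonal n, n.choose ij.1 • ((⇑D)^[ij.1] a * (⇑D)^[ij.2] b) := by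
  induction n with
  | zero => simp
  | succ n ih =>
    rw [sum_antidiagonal_choose_succ_nsmul (fun i j => (⇑D)^[i] a * (⇑D)^[j] b) n]
    simp only [Function.iterate_succ_apply', ih, map_sum, map_nsmul, Derivation.leibniz,
      smul_eq_mul, smul_add, sum_add_distrib]
    congr 1
    refine sum_congr rfl fun ⟨i, j⟩ hij => ?_
    rw [n.choose_symm_of_eq_add (HasAntidiagonal.mem_antidiagonal.1 hij).symm, mul_comm]

theorem Derivation.iterate_apply_eq_zero_of_le {x : A} {m j : ℕ} (h : (⇑D)^[m] x = 0)
    (hj : m ≤ j) : (⇑D)^[j] x = 0 := by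
  obtain ⟨c, rfl⟩ := Nat.exists_eq_add_of_le hj
  rw [add_comm, Function.iterate_add_apply, h, Function.iterate_fixed (map_zero D)]

theorem exists_ndeg {D : Derivation R A A} (hD : IsLND D) {x : A} (hx : x ≠ 0) :
    ∃ m, ndeg D x m := by
  classical
  have hpos : Nat.find (hD x) ≠ 0 := fun h0 => hx (by simpa [h0] using Nat.find_spec (hD x))
  refine ⟨Nat.find (hD x) - 1, Nat.find_min (hD x) (by omega), ?_⟩
  rw [Nat.sub_add_cancel (Nat.one_le_iff_ne_zero.2 hpos)]
  exact Nat.find_spec (hD x)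

theorem ndeg.eq_zero_of_apply_eq_zero {D : Derivation R A A} {x : A} {d : ℕ} (h : ndeg D x d)
    (hx : D x = 0) : d = 0 := by
  by_contra hd
  exact h.1 (D.iterate_apply_eq_zero_of_le (m := 1) hx (by omega))

theorem ndeg.mul [NoZeroDivisors A] [CharZero A] {D : Derivation R A A} {a b : A} {m n : ℕ}
    (ha : ndeg D a m) (hb : ndeg D b n) : ndeg D (a * b) (m + n) := by
  have hvanish : ∀ i j, m < i ∨ n < j → (⇑D)^[i] a * (⇑D)^[j] b = 0 := by
    rintro i j (h | h)
    · rw [D.iterate_apply_eq_zero_of_le ha.2 h, zero_mul]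
    · rw [D.iterate_apply_eq_zero_of_le hb.2 h, mul_zero]
  constructor
  · rw [D.iterate_apply_mul,
      sum_eq_single_of_mem (m, n) (HasAntidiagonal.mem_antidiagonal.2 rfl)]
    · rw [nsmul_eq_mul]
      exact mul_ne_zero (Nat.cast_ne_zero.2 (Nat.choose_pos (Nat.le_add_right m n)).ne')
        (mul_ne_zero ha.1 hb.1)
    · rintro ⟨i, j⟩ hij hne
      rw [HasAntidiagonal.mem_antidiagonal] at hij
      rw [hvanish i j (by grind), smul_zero]
  · rw [D.iterate_apply_mul]
    refine sum_eq_zero fun ⟨i, j⟩ hij => ?_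
    rw [HasAntidiagonal.mem_antidiagonal] at hij
    rw [hvanish i j (by omega), smul_zero]

end

theorem kernel_factorially_closed_general {k B : Type*} [Field k] [CharZero k]
    [CommRing B] [IsDomain B] [Algebra k B]
    (D : Derivation k B B) (hlnd : IsLND D)
    (a b : B) (ha : a ≠ 0) (hb : b ≠ 0) (hab : D (a * b) = 0) :
    D a = 0 ∧ D b = 0 := by
  have : CharZero B := charZero_of_injective_algebraMap (algebraMap k B).injective
  obtain ⟨m, hm⟩ := exists_ndeg hlnd ha
  obtain ⟨n, hn⟩ := exists_ndeg hlnd hb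
  obtain ⟨rfl, rfl⟩ : m = 0 ∧ n = 0 := by
    have := (hm.mul hn).eq_zero_of_apply_eq_zero hab
    omega
  exact ⟨hm.2, hn.2⟩

/-- The kernel of a nonzero locally nilpotent derivation on a domain is factorially
closed: if `a * b` lies in the kernel with `a, b ≠ 0`, then both `a` and `b` do. -/
theorem kernel_factorially_closed {k B : Type*} [Field k] [CharZero k]
    [CommRing B] [IsDomain B] [Algebra k B]
    (D : Derivation k B B) (hD : D ≠ 0) (hlnd : IsLND D)
    (a b : B) (ha : a ≠ 0) (hb : b ≠ 0) (hab : D (a * b) = 0) :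
    D a = 0 ∧ D b = 0 :=
  kernel_factorially_closed_general D hlnd a b ha hb hab
end

section
/- Let B be an integral domain containing a field k of characteristic zero and D a nonzero locally nilpotent k-derivation on B with kernel A. Then A is algebraically closed in B: any element of B that is algebraic over A lies in A. -/
/-! If `D b ≠ 0` and `P` is a nonzero polynomial of least degree with `D`-constant coefficients
and `P(b) = 0`, then `0 = D (P(b)) = P'(b) * D b` forces `P'(b) = 0`. Since `P` has a root it is
not constant, so in characteristic zero `P'` is a nonzero polynomial of smaller degree, again with
`D`-constant coefficients and vanishing at `b`: a contradiction. -/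

open Polynomial

namespace Derivation

variable {k B : Type*} [CommRing k] [CommRing B] [Algebra k B] (D : Derivation k B B)

lemma map_eval_of_forall_coeff {P : B[X]} (hP : ∀ i, D (P.coeff i) = 0) (b : B) :
    D (P.eval b) = P.derivative.eval b * D b := by
  rw [eval_eq_sum, derivative_eval, Polynomial.sum, Polynomial.sum, map_sum, Finset.sum_mul]
  refine Finset.sum_congr rfl fun n _ => ?_
  rw [D.leibniz, D.leibniz_pow, hP n, smul_zero, add_zero, smul_eq_mul, nsmul_eq_mul]
  ring

lemma coeff_derivative_of_forall_coeff {P : B[X]} (hP : ∀ i, D (P.coeff i) = 0) (i : ℕ) :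
    D (P.derivative.coeff i) = 0 := by
  rw [coeff_derivative, D.leibniz, hP, smul_zero, add_zero, ← Nat.cast_succ, D.map_natCast,
    smul_zero]

variable [IsDomain B] [CharZero B]

theorem apply_eq_zero_of_eval_eq_zero {P : B[X]} (hP : P ≠ 0) (hcoeff : ∀ i, D (P.coeff i) = 0)
    {b : B} (heval : P.eval b = 0) : D b = 0 := by
  by_contra hb
  have hderiv_eval : P.derivative.eval b = 0 := by
    have := D.map_eval_of_forall_coeff hcoeff b
    rw [heval, map_zero, eq_comm] at this
    exact (mul_eq_zero.mp this).resolve_right hb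
  have hdeg : P.natDegree ≠ 0 := by
    intro hdeg
    rw [eq_C_of_natDegree_eq_zero hdeg] at heval hP
    rw [eval_C] at heval
    exact hP (by rw [heval, C_0])
  exact hb (apply_eq_zero_of_eval_eq_zero (mt derivative_eq_zero.mp hdeg)
    (D.coeff_derivative_of_forall_coeff hcoeff) hderiv_eval)
termination_by P.natDegree
decreasing_by exact natDegree_derivative_lt hdeg

end Derivation

theorem kernel_algebraically_closed_general {k B : Type*} [Field k] [CharZero k]
    [CommRing B] [IsDomain B] [Algebra k B]
    (D : Derivation k B B)
    (b : B) (P : Polynomial B) (hP : P ≠ 0)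
    (hcoeff : ∀ i : ℕ, D (P.coeff i) = 0)
    (heval : Polynomial.eval b P = 0) :
    D b = 0 :=
  have : CharZero B := charZero_of_injective_algebraMap (algebraMap k B).injective
  D.apply_eq_zero_of_eval_eq_zero hP hcoeff heval

/-- The kernel of a nonzero locally nilpotent derivation on a domain is algebraically
closed in the ring: any element satisfying a nonzero polynomial relation with
coefficients in the kernel lies in the kernel. -/
theorem kernel_algebraically_closed {k B : Type*} [Field k] [CharZero k]
    [CommRing B] [IsDomain B] [Algebra k B]
    (D : Derivation k B B) (hD : D ≠ 0) (hlnd : IsLND D)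
    (b : B) (P : Polynomial B) (hP : P ≠ 0)
    (hcoeff : ∀ i : ℕ, D (P.coeff i) = 0)
    (heval : Polynomial.eval b P = 0) :
    D b = 0 :=
  kernel_algebraically_closed_general D b P hP hcoeff heval
end

section
/- Let B be an integral domain of characteristic zero and D a nonzero locally nilpotent derivation on B with kernel A. Define μ(b) = max{n : D^n(b) ≠ 0} for b ≠ 0 and μ(0) = −∞. Then μ is a degree function: μ(ab) = μ(a) + μ(b) and μ(a+b) ≤ max(μ(a), μ(b)) for all a, b ∈ B. -/
/-!
By the Leibniz rule, `D^[N] (a * b) = ∑_{i + j = N} (N choose i) • D^[i] a * D^[j] b`.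
If `a` and `b` have `D`-degrees `m` and `n`, every term with `i + j > m + n` vanishes, and for
`N = m + n` only the term `(m + n choose m) • D^[m] a * D^[n] b` survives, which is nonzero in a
domain of characteristic zero. The bound for sums is immediate from additivity of `D^[N]`.
-/

open Finset

namespace Derivation

section Iterate

variable {R A : Type*} [CommSemiring R] [CommSemiring A] [Algebra R A] (D : Derivation R A A)

theorem iterate_map_zero (n : ℕ) : (⇑D)^[n] 0 = 0 :=
  Function.iterate_fixed D.map_zero n

theorem iterate_map_add (n : ℕ) (a b : A) : (⇑D)^[n] (a + b) = (⇑D)^[n] a + (⇑D)^[n] b :=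
  _root_.iterate_map_add D.toLinearMap n a b

theorem iterate_eq_zero_of_le {a : A} {m n : ℕ} (h : (⇑D)^[m] a = 0) (hmn : m ≤ n) :
    (⇑D)^[n] a = 0 := by
  obtain ⟨e, rfl⟩ := Nat.exists_eq_add_of_le hmn
  rw [add_comm, Function.iterate_add_apply, h, iterate_map_zero]

theorem iterate_apply_mul_s2 (n : ℕ) (a b : A) :
    (⇑D)^[n] (a * b) =
      ∑ ij ∈ antidiagonal n, n.choose ij.1 • ((⇑D)^[ij.1] a * (⇑D)^[ij.2] b) := by
  induction n with
  | zero => simp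
  | succ n ih =>
    rw [sum_antidiagonal_choose_succ_nsmul (fun i j => (⇑D)^[i] a * (⇑D)^[j] b) n]
    simp only [Function.iterate_succ_apply', ih, map_sum, map_nsmul, leibniz, smul_eq_mul,
      smul_add, sum_add_distrib]
    congr 1
    refine sum_congr rfl fun ⟨i, j⟩ hij ↦ ?_
    rw [n.choose_symm_of_eq_add (HasAntidiagonal.mem_antidiagonal.1 hij).symm, mul_comm]

end Iterate

end Derivation

section Degree

variable {k B : Type*} [CommRing k] [CommRing B] [Algebra k B] {D : Derivation k B B}
  {a b : B} {m n : ℕ}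

theorem iterate_eq_zero_of_ndeg_lt (h : ndeg D a m) (hmn : m < n) : (⇑D)^[n] a = 0 :=
  D.iterate_eq_zero_of_le h.2 hmn

theorem lt_of_ndeg_of_iterate_eq_zero (h : ndeg D a m) (hn : (⇑D)^[n] a = 0) : m < n := by
  by_contra! hnm
  exact h.1 (D.iterate_eq_zero_of_le hn hnm)

theorem ndeg_unique (hm : ndeg D a m) (hn : ndeg D a n) : m = n :=
  Nat.le_antisymm (Nat.lt_succ_iff.1 (lt_of_ndeg_of_iterate_eq_zero hm hn.2))
    (Nat.lt_succ_iff.1 (lt_of_ndeg_of_iterate_eq_zero hn hm.2))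

theorem ndeg_add_le {p : ℕ} (ha : ndeg D a m) (hb : ndeg D b n) (hab : ndeg D (a + b) p) :
    p ≤ max m n := by
  refine Nat.lt_succ_iff.1 (lt_of_ndeg_of_iterate_eq_zero hab ?_)
  rw [D.iterate_map_add, iterate_eq_zero_of_ndeg_lt ha (by omega),
    iterate_eq_zero_of_ndeg_lt hb (by omega), add_zero]

theorem ndeg_mul [NoZeroDivisors B] [CharZero B] (ha : ndeg D a m) (hb : ndeg D b n) :
    ndeg D (a * b) (m + n) := by
  have term_eq_zero : ∀ i j, m < i ∨ n < j → (⇑D)^[i] a * (⇑D)^[j] b = 0 := by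
    rintro i j (hi | hj)
    · rw [iterate_eq_zero_of_ndeg_lt ha hi, zero_mul]
    · rw [iterate_eq_zero_of_ndeg_lt hb hj, mul_zero]
  constructor
  · rw [D.iterate_apply_mul_s2,
      sum_eq_single_of_mem (m, n) (HasAntidiagonal.mem_antidiagonal.2 rfl)]
    · rw [nsmul_eq_mul]
      exact mul_ne_zero (Nat.cast_ne_zero.2 (Nat.choose_pos (m.le_add_right n)).ne')
        (mul_ne_zero ha.1 hb.1)
    · rintro ⟨i, j⟩ hij hne
      rw [HasAntidiagonal.mem_antidiagonal] at hij
      rw [Ne, Prod.mk.injEq] at hne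
      rw [term_eq_zero i j (by omega), smul_zero]
  · rw [D.iterate_apply_mul_s2]
    refine sum_eq_zero fun ⟨i, j⟩ hij ↦ ?_
    rw [term_eq_zero i j (by rw [HasAntidiagonal.mem_antidiagonal] at hij; omega), smul_zero]

end Degree

theorem degD_is_degree_function_general {k B : Type*} [Field k] [CharZero k]
    [CommRing B] [IsDomain B] [Algebra k B]
    (D : Derivation k B B)
    (μ : B → ℕ)
    (hμ : ∀ b : B, b ≠ 0 → ((⇑D)^[μ b] b ≠ 0 ∧ (⇑D)^[μ b + 1] b = 0)) :
    (∀ a b : B, a ≠ 0 → b ≠ 0 → μ (a * b) = μ a + μ b) ∧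
    (∀ a b : B, a ≠ 0 → b ≠ 0 → a + b ≠ 0 → μ (a + b) ≤ max (μ a) (μ b)) := by
  have : CharZero B := charZero_of_injective_algebraMap (algebraMap k B).injective
  exact ⟨fun a b ha hb ↦
      ndeg_unique (hμ _ (mul_ne_zero ha hb)) (ndeg_mul (hμ a ha) (hμ b hb)),
    fun a b ha hb hab ↦ ndeg_add_le (hμ a ha) (hμ b hb) (hμ _ hab)⟩

/-- The function `μ(b) = max {n : D^n b ≠ 0}` attached to a nonzero locally nilpotent
derivation on a domain of characteristic zero is a degree function:
`μ(ab) = μ a + μ b` and `μ(a+b) ≤ max (μ a) (μ b)` (for nonzero elements). -/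
theorem degD_is_degree_function {k B : Type*} [Field k] [CharZero k]
    [CommRing B] [IsDomain B] [Algebra k B]
    (D : Derivation k B B) (hD : D ≠ 0) (hlnd : IsLND D)
    (μ : B → ℕ)
    (hμ : ∀ b : B, b ≠ 0 → ((⇑D)^[μ b] b ≠ 0 ∧ (⇑D)^[μ b + 1] b = 0)) :
    (∀ a b : B, a ≠ 0 → b ≠ 0 → μ (a * b) = μ a + μ b) ∧
    (∀ a b : B, a ≠ 0 → b ≠ 0 → a + b ≠ 0 → μ (a + b) ≤ max (μ a) (μ b)) :=
  degD_is_degree_function_general D μ hμ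
end

section
/- Let B be an integral domain containing a field k of characteristic zero, D a nonzero locally nilpotent k-derivation on B with kernel A, and let r ∈ B be a local slice of D, i.e., D(r) ∈ A \ {0}. Then the localization B_{Dr} of B at Dr satisfies B_{Dr} = A_{Dr}[r], and r is transcendental over A_{Dr}; in particular B_{Dr} is a polynomial ring in one variable over A_{Dr}, provided D²r = 0. -/
/-!
Write `s = D r` and `A = ker D`. On `A[r]` the derivation acts as `s · d/dr`, so by induction on
the nilpotency order every `b ∈ B` satisfies `s ^ m * b ∈ A[r]` for some `m`: if
`s ^ m * D b = P(r)` and `Q` is an antiderivative of `P` (characteristic zero), then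
`s ^ (m + 1) * b - Q(r) ∈ A`. Hence `B_s = A_s[r]`. A relation `P(r) = 0` over `A` of minimal
degree differentiates to `P'(r) * s = 0`, a relation of smaller degree as `B` is a domain, so `r`
is transcendental over `A`, and this survives localization at `s ∈ A`.
-/

open Polynomial

theorem Polynomial.exists_derivative_eq {R : Type*} [CommRing R] (k : Type*) [Field k]
    [CharZero k] [Algebra k R] (P : R[X]) : ∃ Q : R[X], derivative Q = P := by
  induction P using Polynomial.induction_on' with
  | add p q hp hq =>
    obtain ⟨Q₁, rfl⟩ := hp
    obtain ⟨Q₂, rfl⟩ := hq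
    exact ⟨Q₁ + Q₂, derivative_add⟩
  | monomial n a =>
    refine ⟨monomial (n + 1) ((n + 1 : k)⁻¹ • a), ?_⟩
    have hn : (n + 1 : k) ≠ 0 := Nat.cast_add_one_ne_zero n
    rw [derivative_monomial, Nat.add_sub_cancel, Algebra.smul_def, mul_comm, ← mul_assoc,
      ← map_natCast (algebraMap k R), ← map_mul, Nat.cast_add_one, mul_inv_cancel₀ hn,
      map_one, one_mul]

theorem Transcendental.isStronglyTranscendental {R S : Type*} [CommRing R] [CommRing S]
    [IsDomain S] [Algebra R S] {x : S} (h : Transcendental R x) :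
    IsStronglyTranscendental R x := fun u p hp => by
  rcases mul_eq_zero.1 hp with hp | rfl
  · rw [transcendental_iff.1 h p hp, Polynomial.map_zero, zero_mul]
  · rw [C_0, mul_zero]

namespace Derivation

section Kernel

variable {R A : Type*} [CommRing R] [CommRing A] [Algebra R A] (D : Derivation R A A)

def kerSubalgebra : Subalgebra R A where
  carrier := {a | D a = 0}
  mul_mem' {a b} ha hb := by simp_all [leibniz]
  add_mem' ha hb := by simp_all
  algebraMap_mem' := D.map_algebraMap

def extendScalarsKer : Derivation D.kerSubalgebra A A where
  toFun := D
  map_add' := D.map_add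
  map_smul' c a := by simp [Subalgebra.smul_def, leibniz, show D c = 0 from c.2]
  map_one_eq_zero' := D.map_one_eq_zero
  leibniz' := D.leibniz

@[simp]
theorem extendScalarsKer_apply (a : A) : D.extendScalarsKer a = D a := rfl

end Kernel

theorem transcendental_of_map_ne_zero {R A : Type*} [CommRing R] [IsAddTorsionFree R]
    [CommRing A] [IsDomain A] [Algebra R A] [FaithfulSMul R A] (D : Derivation R A A) {x : A}
    (hx : D x ≠ 0) : Transcendental R x := by
  refine transcendental_iff.2 fun p hp => ?_
  induction h : p.natDegree using Nat.strong_induction_on generalizing p with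
  | _ n ih =>
  obtain rfl | hn := eq_or_ne n 0
  · rw [eq_C_of_natDegree_eq_zero h, aeval_C,
      map_eq_zero_iff _ (FaithfulSMul.algebraMap_injective R A)] at hp
    rw [eq_C_of_natDegree_eq_zero h, hp, C_0]
  · have hp' : aeval x (derivative p) = 0 := by
      have := congrArg D hp
      rwa [map_aeval, map_zero, smul_eq_mul, mul_eq_zero, or_iff_left hx] at this
    have := ih _ (h ▸ natDegree_derivative_lt (h ▸ hn)) _ hp' rfl
    exact absurd (derivative_eq_zero.1 this) (h ▸ hn)

theorem exists_aeval_eq_pow_mul_of_iterate_eq_zero {k B : Type*} [Field k] [CharZero k]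
    [CommRing B] [Algebra k B] (D : Derivation k B B) {r : B} (hslice : D (D r) = 0) {n : ℕ}
    {b : B} (hb : (⇑D)^[n] b = 0) :
    ∃ (m : ℕ) (P : D.kerSubalgebra[X]), aeval r P = D r ^ m * b := by
  induction n generalizing b with
  | zero => exact ⟨0, 0, by simp_all⟩
  | succ n ih =>
    obtain ⟨m, P, hP⟩ := ih (b := D b) hb
    obtain ⟨Q, rfl⟩ := exists_derivative_eq k P
    have hDQ : D (aeval r Q) = D r ^ (m + 1) * D b := by
      rw [← extendScalarsKer_apply, map_aeval, smul_eq_mul, hP, extendScalarsKer_apply]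
      ring
    let e : D.kerSubalgebra := ⟨D r ^ (m + 1) * b - aeval r Q, by
      show D _ = 0
      rw [map_sub, hDQ, leibniz, leibniz_pow, hslice]
      simp⟩
    exact ⟨m + 1, C e + Q, by simp [e]⟩

end Derivation

namespace Localization.Away

variable {B : Type*} [CommRing B] {s : B}

theorem algebraMap_mul_invSelf (s : B) : algebraMap B (Away s) s * invSelf s = 1 := by
  simp [invSelf, mk_eq_mk']

theorem eq_mul_invSelf_pow {z w : Away s} {n : ℕ} (h : z * algebraMap B _ s ^ n = w) :
    z = w * invSelf s ^ n := by
  rw [← h, mul_assoc, ← mul_pow, algebraMap_mul_invSelf, one_pow, mul_one]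

end Localization.Away

namespace Subalgebra

open Localization.Away

variable {R B : Type*} [CommRing R] [CommRing B] [Algebra R B] (K : Subalgebra R B) (s : B)

/-- The paper's `K_s`, realized as a subalgebra of `B_s`. -/
def localizationAway : Subalgebra R (Localization.Away s) :=
  Algebra.adjoin R (algebraMap B _ '' K ∪ {invSelf s})

instance : Algebra K (K.localizationAway s) :=
  (((algebraMap B _).comp K.val.toRingHom).codRestrict _ fun a =>
    Algebra.subset_adjoin (.inl ⟨a, a.2, rfl⟩)).toAlgebra

instance : IsScalarTower K (K.localizationAway s) (Localization.Away s) :=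
  IsScalarTower.of_algebraMap_eq fun _ => rfl

variable {K s}

theorem exists_mul_pow_eq_algebraMap (hs : s ∈ K) {z : Localization.Away s}
    (hz : z ∈ K.localizationAway s) :
    ∃ n : ℕ, ∃ a ∈ K, z * algebraMap B _ s ^ n = algebraMap B _ a := by
  induction hz using Algebra.adjoin_induction with
  | mem z hz =>
    rcases hz with ⟨a, ha, rfl⟩ | rfl
    · exact ⟨0, a, ha, by simp⟩
    · exact ⟨1, 1, K.one_mem, by rw [pow_one, mul_comm, algebraMap_mul_invSelf, map_one]⟩
  | algebraMap c =>
    exact ⟨0, algebraMap R B c, K.algebraMap_mem c,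
      by simp [← IsScalarTower.algebraMap_apply]⟩
  | add z w _ _ hz hw =>
    obtain ⟨n, a, ha, hz⟩ := hz
    obtain ⟨m, b, hb, hw⟩ := hw
    refine ⟨n + m, a * s ^ m + b * s ^ n,
      add_mem (mul_mem ha (pow_mem hs m)) (mul_mem hb (pow_mem hs n)), ?_⟩
    simp only [map_add, map_mul, map_pow, ← hz, ← hw]
    ring
  | mul z w _ _ hz hw =>
    obtain ⟨n, a, ha, hz⟩ := hz
    obtain ⟨m, b, hb, hw⟩ := hw
    refine ⟨n + m, a * b, mul_mem ha hb, ?_⟩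
    simp only [map_mul, ← hz, ← hw]
    ring

theorem isLocalizationAway (hs : s ∈ K) :
    IsLocalization.Away (⟨s, hs⟩ : K) (K.localizationAway s) := by
  refine IsLocalization.Away.mk _ ?_ (fun z => ?_) (fun a b hab => ?_)
  · exact .of_mul_eq_one ⟨invSelf s, Algebra.subset_adjoin (.inr rfl)⟩
      (Subtype.ext (algebraMap_mul_invSelf s))
  · obtain ⟨n, a, ha, hz⟩ := exists_mul_pow_eq_algebraMap hs z.2
    exact ⟨n, ⟨a, ha⟩, Subtype.ext hz⟩
  · obtain ⟨n, hn⟩ := IsLocalization.Away.exists_of_eq (S := Localization.Away s) s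
      (congrArg Subtype.val hab)
    exact ⟨n, Subtype.ext hn⟩

theorem adjoin_localizationAway_eq_top {r : B}
    (h : ∀ b : B, ∃ (m : ℕ) (P : K[X]), aeval r P = s ^ m * b) :
    Algebra.adjoin (K.localizationAway s) {algebraMap B (Localization.Away s) r} = ⊤ := by
  set S := Algebra.adjoin (K.localizationAway s) {algebraMap B (Localization.Away s) r}
  have hinv : invSelf s ∈ S :=
    S.algebraMap_mem (⟨_, Algebra.subset_adjoin (.inr rfl)⟩ : K.localizationAway s)
  have hB (b : B) : algebraMap B _ b ∈ S := by
    obtain ⟨m, P, hP⟩ := h b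
    have hP' : algebraMap B _ (aeval r P) ∈ S := by
      rw [← aeval_algebraMap_apply, ← aeval_map_algebraMap (K.localizationAway s)]
      exact aeval_mem_adjoin_singleton _ _
    rw [eq_mul_invSelf_pow (z := algebraMap B _ b) (w := algebraMap B _ (aeval r P))
      (by rw [hP, map_mul, map_pow, mul_comm])]
    exact mul_mem hP' (pow_mem hinv m)
  refine eq_top_iff.2 fun z _ => ?_
  obtain ⟨n, b, hz⟩ := IsLocalization.Away.surj s z
  rw [eq_mul_invSelf_pow hz]
  exact mul_mem (hB b) (pow_mem hinv n)

theorem _root_.Transcendental.algebraMap_localizationAway [IsDomain B] (hs : s ∈ K) {r : B}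
    (h : Transcendental K r) :
    Transcendental (K.localizationAway s) (algebraMap B (Localization.Away s) r) := by
  have := isLocalizationAway hs
  exact ((h.isStronglyTranscendental.of_isLocalization (Submonoid.powers s)).of_isLocalization_left
    (Submonoid.powers (⟨s, hs⟩ : K))).transcendental

end Subalgebra

theorem localization_at_slice_is_polynomial_ring_general {k B : Type*} [Field k] [CharZero k]
    [CommRing B] [IsDomain B] [Algebra k B]
    (D : Derivation k B B) (hlnd : IsLND D)
    (r : B) (hslice : D (D r) = 0) (hr : D r ≠ 0) :
    letI L := Localization.Away (D r)
    letI A' : Subalgebra k L :=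
      Algebra.adjoin k
        ((algebraMap B L '' {b : B | D b = 0}) ∪ {Localization.Away.invSelf (D r)})
    Algebra.adjoin A' ({algebraMap B L r} : Set L) = ⊤ ∧
      Transcendental A' (algebraMap B L r) := by
  have : CharZero D.kerSubalgebra := charZero_of_injective_algebraMap (algebraMap k _).injective
  change Algebra.adjoin (D.kerSubalgebra.localizationAway (D r))
      {algebraMap B (Localization.Away (D r)) r} = ⊤ ∧
    Transcendental (D.kerSubalgebra.localizationAway (D r))
      (algebraMap B (Localization.Away (D r)) r)
  refine ⟨D.kerSubalgebra.adjoin_localizationAway_eq_top fun b => ?_,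
    (D.extendScalarsKer.transcendental_of_map_ne_zero hr).algebraMap_localizationAway hslice⟩
  obtain ⟨n, hn⟩ := hlnd b
  exact D.exists_aeval_eq_pow_mul_of_iterate_eq_zero hslice hn

/-- If `r` is a local slice of a nonzero locally nilpotent derivation `D`
(so `D r ∈ ker D \ {0}`, i.e. `D² r = 0` and `D r ≠ 0`), then in the localization
`B_{Dr}` one has `B_{Dr} = A_{Dr}[r]` with `r` transcendental over `A_{Dr}`, where
`A = ker D`.  Here `A_{Dr}` is realized as the subalgebra of `B_{Dr}` generated by
the image of `A` together with the inverse of `D r`. -/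
theorem localization_at_slice_is_polynomial_ring {k B : Type*} [Field k] [CharZero k]
    [CommRing B] [IsDomain B] [Algebra k B]
    (D : Derivation k B B) (hD : D ≠ 0) (hlnd : IsLND D)
    (r : B) (hslice : D (D r) = 0) (hr : D r ≠ 0) :
    letI L := Localization.Away (D r)
    letI A' : Subalgebra k L :=
      Algebra.adjoin k
        ((algebraMap B L '' {b : B | D b = 0}) ∪ {Localization.Away.invSelf (D r)})
    Algebra.adjoin A' ({algebraMap B L r} : Set L) = ⊤ ∧
      Transcendental A' (algebraMap B L r) :=
  localization_at_slice_is_polynomial_ring_general D hlnd r hslice hr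
end

section
/- Let B be an affine k-algebra over a field k of characteristic zero which is a unique factorization domain, and let D be a nontrivial locally nilpotent k-derivation on B that is irreducible, i.e., the ideal generated by the image D(B) is not contained in any proper principal ideal of B. Let k̄ be an algebraic closure of k and D̄ the natural extension of D to B̄ = B ⊗_k k̄. Then D̄ is irreducible on B̄. -/
open TensorProduct


open TensorProduct

section Aux
open scoped Classical
variable (k B K : Type*) [Field k] [CommRing B] [CommRing K] [Algebra k K] [Algebra k B]

noncomputable def coordEquiv : K ⊗[k] B ≃ₗ[k] (Module.Basis.ofVectorSpaceIndex k K →₀ B) :=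
  (TensorProduct.congr ((Module.Basis.ofVectorSpace k K).repr) (LinearEquiv.refl k B)).trans
    (TensorProduct.finsuppScalarLeft k B _)

variable {k B K}

lemma coordEquiv_tmul (c : K) (b : B) (i) :
    coordEquiv k B K (c ⊗ₜ[k] b) i = (Module.Basis.ofVectorSpace k K).repr c i • b := by
  simp [coordEquiv, TensorProduct.finsuppScalarLeft_apply_tmul_apply]

lemma coordEquiv_one_tmul_mul (x : B) (z : K ⊗[k] B) (i) :
    coordEquiv k B K (((1:K) ⊗ₜ[k] x) * z) i = x * coordEquiv k B K z i := by
  induction z using TensorProduct.induction_on with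
  | zero => simp
  | tmul c b =>
      rw [Algebra.TensorProduct.tmul_mul_tmul, one_mul, coordEquiv_tmul, coordEquiv_tmul,
        mul_smul_comm]
  | add u v hu hv => simp [mul_add, hu, hv]

lemma dvd_coordEquiv {x : B} {z : K ⊗[k] B} (h : ((1:K) ⊗ₜ[k] x) ∣ z) (i) :
    x ∣ coordEquiv k B K z i := by
  obtain ⟨w, rfl⟩ := h
  rw [coordEquiv_one_tmul_mul]
  exact dvd_mul_right _ _

lemma tmul_dvd_of_coords [IsDomain B] {x : B} (hx : x ≠ 0) {z : K ⊗[k] B}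
    (h : ∀ i, x ∣ coordEquiv k B K z i) : ((1:K) ⊗ₜ[k] x) ∣ z := by
  classical
  set g : B → B := fun b => if h : x ∣ b then h.choose else 0 with hgdef
  have hg0 : g 0 = 0 := by
    show (if h : x ∣ (0:B) then h.choose else 0) = 0
    rw [dif_pos (dvd_zero x)]
    have h0 := (dvd_zero x).choose_spec
    rcases mul_eq_zero.mp h0.symm with h' | h'
    · exact absurd h' hx
    · exact h'
  refine ⟨(coordEquiv k B K).symm (((coordEquiv k B K) z).mapRange g hg0), ?_⟩
  apply (coordEquiv k B K).injective
  ext i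
  rw [coordEquiv_one_tmul_mul, LinearEquiv.apply_symm_apply, Finsupp.mapRange_apply,
    hgdef]
  show _ = x * (if h : x ∣ ((coordEquiv k B K) z) i then h.choose else 0)
  rw [dif_pos (h i)]
  exact (h i).choose_spec

lemma tmul_right_eq_zero [Nontrivial K] {x : B} (h : (1:K) ⊗ₜ[k] x = 0) : x = 0 := by
  obtain ⟨i, hi⟩ : ∃ i, (Module.Basis.ofVectorSpace k K).repr 1 i ≠ 0 := by
    by_contra hc
    push_neg at hc
    have : (Module.Basis.ofVectorSpace k K).repr 1 = 0 := Finsupp.ext hc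
    exact one_ne_zero ((Module.Basis.ofVectorSpace k K).repr.map_eq_zero_iff.mp this)
  have h2 : (Module.Basis.ofVectorSpace k K).repr 1 i • x = 0 := by
    rw [← coordEquiv_tmul (k := k) (1:K) x i, h, map_zero]; rfl
  have := congrArg (fun y => ((Module.Basis.ofVectorSpace k K).repr 1 i)⁻¹ • y) h2
  simpa [smul_smul, inv_mul_cancel₀ hi] using this

end Aux

/-- If `B` is an affine `k`-domain which is a UFD and `D` is a nonzero irreducible
locally nilpotent `k`-derivation on `B`, then the natural extension `D̄` of `D` to
`B̄ = k̄ ⊗_k B` (assumed a domain and a UFD) is again irreducible. -/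
theorem irreducible_lnd_base_change {k B : Type*} [Field k] [CharZero k]
    [CommRing B] [IsDomain B] [Algebra k B] [Algebra.FiniteType k B]
    [UniqueFactorizationMonoid B]
    [IsDomain ((AlgebraicClosure k) ⊗[k] B)]
    [UniqueFactorizationMonoid ((AlgebraicClosure k) ⊗[k] B)]
    (D : Derivation k B B) (hD : D ≠ 0) (hlnd : IsLND D) (hirr : IsIrred D)
    (D' : Derivation (AlgebraicClosure k) ((AlgebraicClosure k) ⊗[k] B)
        ((AlgebraicClosure k) ⊗[k] B))
    (hD' : ∀ (c : AlgebraicClosure k) (b : B), D' (c ⊗ₜ[k] b) = c ⊗ₜ[k] (D b)) :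
    IsIrred D' := by
  classical
  letI : NormalizationMonoid B := (UniqueFactorizationMonoid.normalizationMonoid (α := B)).toNormalizationMonoid
  letI : NormalizedGCDMonoid B := UniqueFactorizationMonoid.toNormalizedGCDMonoid B
  haveI : Nonempty (GCDMonoid B) := ⟨inferInstance⟩
  haveI : IsNoetherianRing B := Algebra.FiniteType.isNoetherianRing k B
  intro t ht
  -- every element of the ideal generated by the image of `D` maps into `(t)`
  have hmem : ∀ b ∈ Ideal.span (Set.range ⇑D), t ∣ (1 : AlgebraicClosure k) ⊗ₜ[k] b := by
    have hsub : Ideal.span (Set.range ⇑D) ≤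
        Ideal.comap (Algebra.TensorProduct.includeRight
          (R := k) (A := AlgebraicClosure k) (B := B)).toRingHom (Ideal.span {t}) := by
      rw [Ideal.span_le]
      rintro _ ⟨c, rfl⟩
      have h1 : D' ((1 : AlgebraicClosure k) ⊗ₜ[k] c) ∈ Ideal.span {t} :=
        ht (Ideal.subset_span ⟨(1 : AlgebraicClosure k) ⊗ₜ[k] c, rfl⟩)
      rw [hD'] at h1
      simpa [Ideal.mem_comap] using h1
    intro b hb
    have h2 := hsub hb
    rw [Ideal.mem_comap] at h2
    rw [← Ideal.mem_span_singleton]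
    simpa using h2
  obtain ⟨c0, hc0⟩ : ∃ c, D c ≠ 0 := by
    by_contra hc
    push_neg at hc
    exact hD (by ext c; simp [hc c])
  have ht0 : t ≠ 0 := by
    rintro rfl
    have h3 := hmem (D c0) (Ideal.subset_span ⟨c0, rfl⟩)
    rw [zero_dvd_iff] at h3
    exact hc0 (tmul_right_eq_zero h3)
  by_contra hunit
  obtain ⟨p, hpirr, hpd⟩ := WfDvdMonoid.exists_irreducible_factor hunit ht0
  have hp : Prime p := UniqueFactorizationMonoid.irreducible_iff_prime.mp hpirr
  have hnz : ∀ x : B, x ≠ 0 → (1 : AlgebraicClosure k) ⊗ₜ[k] x ≠ 0 :=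
    fun x hx h => hx (tmul_right_eq_zero h)
  have hunit_tensor : ∀ x : B, IsUnit x → IsUnit ((1 : AlgebraicClosure k) ⊗ₜ[k] x) := by
    intro x hx
    obtain ⟨d, hd⟩ := hx.exists_right_inv
    exact IsUnit.of_mul_eq_one ((1 : AlgebraicClosure k) ⊗ₜ[k] d)
      (by rw [Algebra.TensorProduct.tmul_mul_tmul, one_mul, hd,
        ← Algebra.TensorProduct.one_def])
  -- main lemma: `p` divides the image of the gcd of any two elements whose images it divides
  have L : ∀ a c : B, p ∣ (1 : AlgebraicClosure k) ⊗ₜ[k] a →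
      p ∣ (1 : AlgebraicClosure k) ⊗ₜ[k] c →
      p ∣ (1 : AlgebraicClosure k) ⊗ₜ[k] (gcd a c) := by
    intro a c hpa hpc
    by_cases hg : gcd a c = 0
    · rw [hg]
      simp
    obtain ⟨a', ha'⟩ := gcd_dvd_left a c
    obtain ⟨c', hc'⟩ := gcd_dvd_right a c
    have hrel : IsRelPrime a' c' := by
      intro d hda hdc
      have h1 : gcd a c * d ∣ a :=
        (mul_dvd_mul_left (gcd a c) hda).trans (dvd_of_eq ha'.symm)
      have h2 : gcd a c * d ∣ c :=
        (mul_dvd_mul_left (gcd a c) hdc).trans (dvd_of_eq hc'.symm)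
      have h3 : gcd a c * d ∣ gcd a c * 1 := by rw [mul_one]; exact dvd_gcd h1 h2
      exact isUnit_of_dvd_one ((mul_dvd_mul_iff_left hg).mp h3)
    rw [show (1 : AlgebraicClosure k) ⊗ₜ[k] a =
        ((1 : AlgebraicClosure k) ⊗ₜ[k] gcd a c) * ((1 : AlgebraicClosure k) ⊗ₜ[k] a') by
      rw [Algebra.TensorProduct.tmul_mul_tmul, one_mul, ← ha']] at hpa
    rw [show (1 : AlgebraicClosure k) ⊗ₜ[k] c =
        ((1 : AlgebraicClosure k) ⊗ₜ[k] gcd a c) * ((1 : AlgebraicClosure k) ⊗ₜ[k] c') by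
      rw [Algebra.TensorProduct.tmul_mul_tmul, one_mul, ← hc']] at hpc
    rcases hp.dvd_mul.mp hpa with h | hpa'
    · exact h
    rcases hp.dvd_mul.mp hpc with h | hpc'
    · exact h
    exfalso
    by_cases ha0 : a' = 0
    · have hcu : IsUnit c' := hrel (show c' ∣ a' by rw [ha0]; exact dvd_zero c') dvd_rfl
      exact hp.not_isUnit (isUnit_of_dvd_unit hpc' (hunit_tensor c' hcu))
    by_cases hc0 : c' = 0
    · have hau : IsUnit a' := hrel.symm (show a' ∣ c' by rw [hc0]; exact dvd_zero a') dvd_rfl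
      exact hp.not_isUnit (isUnit_of_dvd_unit hpa' (hunit_tensor a' hau))
    obtain ⟨u, hu⟩ := hpa'
    obtain ⟨r, hr⟩ := hpc'
    have hdc' : ((1 : AlgebraicClosure k) ⊗ₜ[k] c') ∣ ((1 : AlgebraicClosure k) ⊗ₜ[k] a') * r :=
      ⟨u, by rw [hu, hr]; ring⟩
    have hall : ∀ i, a' * c' ∣
        coordEquiv k B (AlgebraicClosure k) (((1 : AlgebraicClosure k) ⊗ₜ[k] a') * r) i :=
      fun i => hrel.mul_dvd (dvd_coordEquiv (dvd_mul_right _ _) i) (dvd_coordEquiv hdc' i)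
    obtain ⟨w, hw⟩ := tmul_dvd_of_coords (mul_ne_zero ha0 hc0) hall
    have h5 : r = ((1 : AlgebraicClosure k) ⊗ₜ[k] c') * w := by
      apply mul_left_cancel₀ (hnz a' ha0)
      rw [hw, show (1 : AlgebraicClosure k) ⊗ₜ[k] (a' * c') =
        ((1 : AlgebraicClosure k) ⊗ₜ[k] a') * ((1 : AlgebraicClosure k) ⊗ₜ[k] c') by
        rw [Algebra.TensorProduct.tmul_mul_tmul, one_mul]]
      ring
    have h7 : (1 : (AlgebraicClosure k) ⊗[k] B) = p * w := by
      apply mul_left_cancel₀ (hnz c' hc0)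
      rw [mul_one]
      calc (1 : AlgebraicClosure k) ⊗ₜ[k] c' = p * r := hr
        _ = p * (((1 : AlgebraicClosure k) ⊗ₜ[k] c') * w) := by rw [h5]
        _ = ((1 : AlgebraicClosure k) ⊗ₜ[k] c') * (p * w) := by ring
    exact hp.not_isUnit (IsUnit.of_mul_eq_one _ h7.symm)
  -- generators of the ideal generated by the image of `D`
  obtain ⟨s, hs⟩ := IsNoetherian.noetherian (Ideal.span (Set.range ⇑D))
  have key : ∀ u : Finset B, (∀ b ∈ u, p ∣ (1 : AlgebraicClosure k) ⊗ₜ[k] b) →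
      p ∣ (1 : AlgebraicClosure k) ⊗ₜ[k] (u.gcd id) := by
    intro u
    induction u using Finset.induction_on with
    | empty => intro _; simp [Finset.gcd_empty]
    | @insert a u ha ih =>
        intro hmemu
        rw [Finset.gcd_insert]
        exact L _ _ (hmemu _ (Finset.mem_insert_self _ _))
          (ih fun b hb => hmemu b (Finset.mem_insert_of_mem hb))
  have hpall : ∀ b ∈ s, p ∣ (1 : AlgebraicClosure k) ⊗ₜ[k] b :=
    fun b hb => dvd_trans hpd (hmem b (hs ▸ Submodule.subset_span hb))
  have hgu : IsUnit (s.gcd id) := by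
    apply hirr
    rw [← hs, Submodule.span_le]
    intro b hb
    rw [SetLike.mem_coe, Ideal.mem_span_singleton]
    exact Finset.gcd_dvd hb
  exact hp.not_isUnit (isUnit_of_dvd_unit (key s hpall) (hunit_tensor _ hgu))
end

section
/- Let k be a field of characteristic zero and D an irreducible homogeneous locally nilpotent derivation of rank 2 and degree 0 on k[U,V,W] with D(U) = 0 and ker(D) = k[U, P] for a homogeneous polynomial P of degree 2. Then there exists a linear system of variables {X, Y, Z} with 0 = deg_D(X) < deg_D(Y) < deg_D(Z) such that, up to a nonzero constant multiple, P = Y² + XZ. -/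
open MvPolynomial Finset

namespace StructAux

variable {k : Type*} [CommRing k]

/-- The linear form with coefficient vector `v`. -/
noncomputable def lin : (Fin 3 → k) →ₗ[k] MvPolynomial (Fin 3) k where
  toFun v := ∑ i, v i • X i
  map_add' u v := by simp [add_smul, Finset.sum_add_distrib]
  map_smul' a v := by simp [Finset.smul_sum, smul_smul]

lemma lin_apply (v : Fin 3 → k) : lin v = ∑ i, v i • X i := rfl

lemma coeff_lin (v : Fin 3 → k) (i : Fin 3) :
    coeff (Finsupp.single i 1) (lin v) = v i := by
  classical
  rw [lin_apply, coeff_sum]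
  have : ∀ j : Fin 3, coeff (Finsupp.single i 1) (v j • X j)
      = if j = i then v j else 0 := by
    intro j
    rw [MvPolynomial.coeff_smul, coeff_X']
    by_cases h : j = i
    · subst h; simp
    · rw [if_neg h, if_neg, smul_zero]
      intro hc
      exact h (by simpa [Finsupp.single_left_inj (one_ne_zero (α := ℕ))] using hc)
  simp only [this]
  simp

lemma lin_eq_zero_iff (v : Fin 3 → k) : lin v = 0 ↔ v = 0 := by
  constructor
  · intro h
    funext i
    have := coeff_lin v i
    rw [h] at this
    simpa using this.symm
  · rintro rfl; exact map_zero _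

lemma lin_homog (v : Fin 3 → k) : (lin v).IsHomogeneous 1 := by
  rw [lin_apply]
  apply MvPolynomial.IsHomogeneous.sum
  intro i _
  rw [smul_eq_C_mul]
  exact (isHomogeneous_X _ _).C_mul _

lemma degree_one_single (d : Fin 3 →₀ ℕ) (hd : Finsupp.degree d = 1) :
    ∃ i, d = Finsupp.single i 1 := by
  classical
  have hsum : d 0 + d 1 + d 2 = 1 := by
    have : Finsupp.degree d = ∑ i : Fin 3, d i := by
      rw [Finsupp.degree]
      exact Finset.sum_subset (Finset.subset_univ _)
        (fun x _ hx => Finsupp.notMem_support_iff.mp hx)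
    rw [this, Fin.sum_univ_three] at hd
    omega
  rcases Nat.eq_zero_or_pos (d 0) with h0 | h0
  · rcases Nat.eq_zero_or_pos (d 1) with h1 | h1
    · refine ⟨2, ?_⟩
      ext j
      fin_cases j <;> simp [Finsupp.single_apply] <;> omega
    · refine ⟨1, ?_⟩
      ext j
      fin_cases j <;> simp [Finsupp.single_apply] <;> omega
  · refine ⟨0, ?_⟩
    ext j
    fin_cases j <;> simp [Finsupp.single_apply] <;> omega

/-- Any homogeneous polynomial of degree 1 is a linear form. -/
lemma homog_one_eq_lin (f : MvPolynomial (Fin 3) k) (hf : f.IsHomogeneous 1) :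
    ∃ v : Fin 3 → k, f = lin v := by
  classical
  refine ⟨fun i => coeff (Finsupp.single i 1) f, ?_⟩
  ext m
  by_cases hm : ∃ i, m = Finsupp.single i 1
  · obtain ⟨i, rfl⟩ := hm
    rw [coeff_lin]
  · rw [hf.coeff_eq_zero (n := 1) ?_, lin_apply, coeff_sum]
    · symm
      apply Finset.sum_eq_zero
      intro j _
      rw [MvPolynomial.coeff_smul, coeff_X', if_neg, smul_zero]
      exact fun hc => hm ⟨j, hc.symm⟩
    · intro hdeg
      exact hm ((degree_one_single m hdeg).imp fun i h => h)

lemma fin2_cases_one (d : Fin 2 →₀ ℕ) (hd : d 0 + 2 * d 1 = 1) :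
    d = Finsupp.single 0 1 := by
  ext j
  fin_cases j <;> simp [Finsupp.single_apply] <;> omega

lemma fin2_cases_two (d : Fin 2 →₀ ℕ) (hd : d 0 + 2 * d 1 = 2) :
    d = Finsupp.single 0 2 ∨ d = Finsupp.single 1 1 := by
  rcases Nat.eq_zero_or_pos (d 1) with h1 | h1
  · left; ext j; fin_cases j <;> simp [Finsupp.single_apply] <;> omega
  · right; ext j; fin_cases j <;> simp [Finsupp.single_apply] <;> omega

/-- Structure of low-degree homogeneous components of elements of `k[X₀, P]`. -/
lemma adjoin_component (P : MvPolynomial (Fin 3) k) (hP : P.IsHomogeneous 2)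
    (f : MvPolynomial (Fin 3) k)
    (hf : f ∈ Algebra.adjoin k ({X 0, P} : Set (MvPolynomial (Fin 3) k))) :
    (∃ a : k, homogeneousComponent 1 f = C a * X 0) ∧
    (∃ a b : k, homogeneousComponent 2 f = C a * X 0 ^ 2 + C b * P) := by
  classical
  have hrange : ({X 0, P} : Set (MvPolynomial (Fin 3) k)) = Set.range ![X 0, P] := by
    ext y
    simp only [Set.mem_insert_iff, Set.mem_singleton_iff, Set.mem_range, Fin.exists_fin_two,
      Matrix.cons_val_zero, Matrix.cons_val_one, Matrix.head_cons]
    tauto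
  rw [hrange, Algebra.adjoin_range_eq_range_aeval, AlgHom.mem_range] at hf
  obtain ⟨q, rfl⟩ := hf
  have expand : (aeval ![X 0, P]) q
      = ∑ d ∈ q.support, C (coeff d q) * (X 0 ^ d 0 * P ^ d 1) := by
    conv_lhs => rw [q.as_sum, map_sum]
    refine Finset.sum_congr rfl fun d _ => ?_
    rw [aeval_monomial, Finsupp.prod_fintype _ _ (fun i => pow_zero _), Fin.prod_univ_two]
    simp [algebraMap_eq]
  have hterm : ∀ d : Fin 2 →₀ ℕ,
      (C (coeff d q) * (X 0 ^ d 0 * P ^ d 1)).IsHomogeneous (d 0 + 2 * d 1) := by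
    intro d
    exact ((isHomogeneous_X_pow (R := k) 0 (d 0)).mul (hP.pow (d 1))).C_mul _
  have hcomp : ∀ m : ℕ, homogeneousComponent m ((aeval ![X 0, P]) q)
      = ∑ d ∈ q.support,
        if m = d 0 + 2 * d 1 then C (coeff d q) * (X 0 ^ d 0 * P ^ d 1) else 0 := by
    intro m
    rw [expand, map_sum]
    refine Finset.sum_congr rfl fun d _ => ?_
    exact homogeneousComponent_of_mem ((mem_homogeneousSubmodule _ _).mpr (hterm d))
  constructor
  · -- degree 1
    have h1 : homogeneousComponent 1 ((aeval ![X 0, P]) q)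
        = if Finsupp.single (0 : Fin 2) 1 ∈ q.support
          then C (coeff (Finsupp.single 0 1) q) * (X 0 ^ ((Finsupp.single (0:Fin 2) 1) 0)
            * P ^ ((Finsupp.single (0:Fin 2) 1) 1)) else 0 := by
      rw [hcomp 1]
      have hstep : (∑ d ∈ q.support,
          if 1 = d 0 + 2 * d 1 then C (coeff d q) * (X 0 ^ d 0 * P ^ d 1) else 0)
          = ∑ d ∈ q.support, if d = Finsupp.single 0 1
            then C (coeff d q) * (X 0 ^ d 0 * P ^ d 1) else 0 := by
        refine Finset.sum_congr rfl fun d _ => ?_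
        by_cases hd : d = Finsupp.single 0 1
        · subst hd
          rw [if_pos rfl, if_pos]
          simp [Finsupp.single_apply]
        · rw [if_neg hd, if_neg]
          intro hc
          exact hd (fin2_cases_one d hc.symm)
      rw [hstep, Finset.sum_ite_eq' q.support]
    rw [h1]
    split_ifs with h
    · exact ⟨coeff (Finsupp.single 0 1) q, by simp [Finsupp.single_apply]⟩
    · exact ⟨0, by simp⟩
  · -- degree 2
    have hAB : (Finsupp.single (0 : Fin 2) 2) ≠ Finsupp.single 1 1 := by
      intro h
      have := DFunLike.congr_fun h 0
      simp [Finsupp.single_apply] at this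
    have h2 : homogeneousComponent 2 ((aeval ![X 0, P]) q)
        = (if Finsupp.single (0 : Fin 2) 2 ∈ q.support
            then C (coeff (Finsupp.single 0 2) q) * (X 0 ^ ((Finsupp.single (0:Fin 2) 2) 0)
              * P ^ ((Finsupp.single (0:Fin 2) 2) 1)) else 0)
          + (if Finsupp.single (1 : Fin 2) 1 ∈ q.support
            then C (coeff (Finsupp.single 1 1) q) * (X 0 ^ ((Finsupp.single (1:Fin 2) 1) 0)
              * P ^ ((Finsupp.single (1:Fin 2) 1) 1)) else 0) := by
      rw [hcomp 2]
      have hstep : (∑ d ∈ q.support,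
          if 2 = d 0 + 2 * d 1 then C (coeff d q) * (X 0 ^ d 0 * P ^ d 1) else 0)
          = ∑ d ∈ q.support,
            ((if d = Finsupp.single 0 2 then C (coeff d q) * (X 0 ^ d 0 * P ^ d 1) else 0)
            + (if d = Finsupp.single 1 1 then C (coeff d q) * (X 0 ^ d 0 * P ^ d 1) else 0)) := by
        refine Finset.sum_congr rfl fun d _ => ?_
        by_cases hdA : d = Finsupp.single 0 2
        · subst hdA
          rw [if_pos rfl, if_neg hAB, add_zero, if_pos]
          simp [Finsupp.single_apply]
        · by_cases hdB : d = Finsupp.single 1 1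
          · subst hdB
            rw [if_neg hdA, if_pos rfl, zero_add, if_pos]
            simp [Finsupp.single_apply]
          · rw [if_neg hdA, if_neg hdB, add_zero, if_neg]
            intro hc
            rcases fin2_cases_two d hc.symm with h | h
            · exact hdA h
            · exact hdB h
      rw [hstep, Finset.sum_add_distrib, Finset.sum_ite_eq' q.support,
        Finset.sum_ite_eq' q.support]
    rw [h2]
    refine ⟨if Finsupp.single (0 : Fin 2) 2 ∈ q.support then coeff (Finsupp.single 0 2) q else 0,
      if Finsupp.single (1 : Fin 2) 1 ∈ q.support then coeff (Finsupp.single 1 1) q else 0, ?_⟩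
    split_ifs <;> simp [Finsupp.single_apply]




lemma lin_delta (i : Fin 3) : lin (fun j => if i = j then (1:k) else 0) = X i := by
  rw [lin_apply]
  rw [Finset.sum_eq_single i]
  · simp
  · intro j _ hj
    rw [if_neg (fun h => hj h.symm), zero_smul]
  · intro h; exact absurd (Finset.mem_univ i) h

lemma aeval_lin (A : Matrix (Fin 3) (Fin 3) k) (v : Fin 3 → k) :
    (aeval (R := k) (fun i => lin (A i))) (lin v) = lin (Matrix.vecMul v A) := by
  rw [lin_apply, map_sum]
  have : ∀ i, (aeval (R := k) (fun i => lin (A i))) (v i • X i) = v i • lin (A i) := by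
    intro i
    rw [smul_eq_C_mul, map_mul, aeval_C, aeval_X, algebraMap_eq, ← smul_eq_C_mul]
  simp only [this]
  have h2 : (∑ x : Fin 3, v x • lin (A x)) = lin (∑ x : Fin 3, v x • A x) := by
    rw [map_sum]
    simp
  rw [h2]
  have h3 : (∑ x : Fin 3, v x • A x) = Matrix.vecMul v A := by
    funext l
    simp [Matrix.vecMul, dotProduct, Finset.sum_apply]
  rw [h3]

/-- A linearly independent triple of linear forms is a coordinate system. -/
lemma exists_coordsys {k : Type*} [Field k] (u : Fin 3 → (Fin 3 → k))
    (hu : LinearIndependent k u) :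
    ∃ σ : MvPolynomial (Fin 3) k ≃ₐ[k] MvPolynomial (Fin 3) k,
      ∀ i, σ (X i) = lin (u i) := by
  set M : Matrix (Fin 3) (Fin 3) k := Matrix.of u with hMdef
  have hM : IsUnit M := Matrix.linearIndependent_rows_iff_isUnit.mp hu
  obtain ⟨Mu, hMu⟩ := hM
  set N : Matrix (Fin 3) (Fin 3) k := ↑Mu⁻¹ with hNdef
  have hNM : N * M = 1 := by rw [hNdef, ← hMu]; exact Mu.inv_mul
  have hMN : M * N = 1 := by rw [hNdef, ← hMu]; exact Mu.mul_inv
  have keyX : ∀ (A : Matrix (Fin 3) (Fin 3) k) i,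
      (aeval (R := k) (fun i => lin (A i))) (X i) = lin (A i) := fun A i => aeval_X _ _
  have comp : ∀ (A B : Matrix (Fin 3) (Fin 3) k) (i : Fin 3),
      (aeval (R := k) (fun i => lin (A i))) (lin (B i)) = lin ((B * A) i) := by
    intro A B i
    have h : Matrix.vecMul (B i) A = (B * A) i := by
      funext l
      simp [Matrix.mul_apply, Matrix.vecMul, dotProduct]
    rw [aeval_lin, h]
  have hlin_one : ∀ i : Fin 3, lin ((1 : Matrix (Fin 3) (Fin 3) k) i) = X i := by
    intro i
    have h : ((1 : Matrix (Fin 3) (Fin 3) k) i) = fun j => if i = j then (1:k) else 0 := by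
      funext j
      rw [Matrix.one_apply]
    rw [h, lin_delta]
  refine ⟨AlgEquiv.ofAlgHom (aeval (R := k) (fun i => lin (M i))) (aeval (R := k) (fun i => lin (N i))) ?_ ?_,
    fun i => keyX M i⟩
  · apply MvPolynomial.algHom_ext
    intro i
    rw [AlgHom.comp_apply, keyX, comp, hNM, hlin_one, AlgHom.id_apply]
  · apply MvPolynomial.algHom_ext
    intro i
    rw [AlgHom.comp_apply, keyX, comp, hMN, hlin_one, AlgHom.id_apply]


end StructAux



open MvPolynomial

/-- The Jacobian derivation `g ↦ ∂(f₁,f₂,g)/∂(X₀,X₁,X₂)` on `k[X₀,X₁,X₂]`. -/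
noncomputable def jac {k : Type*} [CommRing k]
    (f₁ f₂ g : MvPolynomial (Fin 3) k) : MvPolynomial (Fin 3) k :=
  Matrix.det (Matrix.of fun i j => MvPolynomial.pderiv j (![f₁, f₂, g] i))

/-- `V 0, V 1, V 2` form a system of coordinates (variables) of `k[X₀,X₁,X₂]`. -/
def IsCoordSys {k : Type*} [CommRing k]
    (V : Fin 3 → MvPolynomial (Fin 3) k) : Prop :=
  ∃ σ : MvPolynomial (Fin 3) k ≃ₐ[k] MvPolynomial (Fin 3) k,
    ∀ i, σ (X i) = V i

/-- `D` is homogeneous of degree `d` with respect to the standard grading. -/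
def IsHomogDer {k : Type*} [CommRing k]
    (D : Derivation k (MvPolynomial (Fin 3) k) (MvPolynomial (Fin 3) k))
    (d : ℕ) : Prop :=
  ∀ (i : ℕ) (f : MvPolynomial (Fin 3) k),
    f.IsHomogeneous i → (D f).IsHomogeneous (i + d)

/-- `D` has rank 2: some coordinate system has its last variable in the kernel, but no
coordinate system has its last two variables in the kernel. -/
def HasRank2 {k : Type*} [CommRing k]
    (D : Derivation k (MvPolynomial (Fin 3) k) (MvPolynomial (Fin 3) k)) : Prop :=
  (∃ V : Fin 3 → MvPolynomial (Fin 3) k, IsCoordSys V ∧ D (V 2) = 0) ∧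
  ¬ (∃ V : Fin 3 → MvPolynomial (Fin 3) k, IsCoordSys V ∧ D (V 1) = 0 ∧ D (V 2) = 0)

/-- `D` is triangularizable: in some coordinate system `{X,Y,Z}` one has `D X ∈ k`,
`D Y ∈ k[X]`, `D Z ∈ k[X,Y]`. -/
def IsTriangularizable {k : Type*} [CommRing k]
    (D : Derivation k (MvPolynomial (Fin 3) k) (MvPolynomial (Fin 3) k)) : Prop :=
  ∃ V : Fin 3 → MvPolynomial (Fin 3) k, IsCoordSys V ∧
    (∃ c : k, D (V 0) = C c) ∧
    D (V 1) ∈ Algebra.adjoin k ({V 0} : Set (MvPolynomial (Fin 3) k)) ∧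
    D (V 2) ∈ Algebra.adjoin k ({V 0, V 1} : Set (MvPolynomial (Fin 3) k))

open StructAux

set_option maxHeartbeats 1600000

/-- Degree-0 case of the structure lemma: for an irreducible homogeneous rank-2
locally nilpotent derivation `D` of degree `0` on `k[U,V,W]` with `D U = 0` and
`ker D = k[U, P]`, `P` homogeneous of degree 2, there is a linear system of
variables `{X,Y,Z}` with `0 = deg_D X < deg_D Y < deg_D Z` such that, up to a
nonzero constant, `P = Y² + XZ`. -/

theorem structure_degree_zero {k : Type*} [Field k] [CharZero k]
    (D : Derivation k (MvPolynomial (Fin 3) k) (MvPolynomial (Fin 3) k))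
    (hlnd : IsLND D) (hirr : IsIrred D) (hrank : HasRank2 D)
    (hhom : IsHomogDer D 0) (hU : D (X 0) = 0)
    (P : MvPolynomial (Fin 3) k) (hPhom : P.IsHomogeneous 2)
    (hker : {b | D b = 0}
      = ↑(Algebra.adjoin k ({X 0, P} : Set (MvPolynomial (Fin 3) k)))) :
    ∃ V : Fin 3 → MvPolynomial (Fin 3) k, IsCoordSys V ∧
      (∀ i, (V i).IsHomogeneous 1) ∧
      D (V 0) = 0 ∧
      (∃ m n : ℕ, 0 < m ∧ m < n ∧ ndeg D (V 1) m ∧ ndeg D (V 2) n) ∧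
      ∃ c : k, c ≠ 0 ∧ P = C c * ((V 1) ^ 2 + V 0 * V 2) := by
  classical
  -- membership in the kernel gives membership in the adjoined subalgebra
  have hmemker : ∀ f, D f = 0 →
      f ∈ Algebra.adjoin k ({X 0, P} : Set (MvPolynomial (Fin 3) k)) := by
    intro f hf
    have hf' : f ∈ {b | D b = 0} := hf
    rw [hker] at hf'
    exact hf'
  have ker1 : ∀ f, D f = 0 → f.IsHomogeneous 1 → ∃ a, f = C a * X 0 := by
    intro f hf h1
    obtain ⟨⟨a, ha⟩, -⟩ := adjoin_component P hPhom f (hmemker f hf)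
    refine ⟨a, ?_⟩
    rw [← ha, homogeneousComponent_of_mem ((mem_homogeneousSubmodule _ _).mpr h1), if_pos rfl]
  have ker2 : ∀ f, D f = 0 → f.IsHomogeneous 2 → ∃ a b, f = C a * X 0 ^ 2 + C b * P := by
    intro f hf h2
    obtain ⟨-, a, b, hab⟩ := adjoin_component P hPhom f (hmemker f hf)
    refine ⟨a, b, ?_⟩
    rw [← hab, homogeneousComponent_of_mem ((mem_homogeneousSubmodule _ _).mpr h2), if_pos rfl]
  -- the derivation acts linearly on linear forms
  have hX1 : (D (X 1)).IsHomogeneous 1 := by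
    have := hhom 1 (X 1) (isHomogeneous_X _ _); simpa using this
  have hX2 : (D (X 2)).IsHomogeneous 1 := by
    have := hhom 1 (X 2) (isHomogeneous_X _ _); simpa using this
  obtain ⟨b, hb⟩ := homog_one_eq_lin _ hX1
  obtain ⟨c, hc⟩ := homog_one_eq_lin _ hX2
  set L : (Fin 3 → k) →ₗ[k] (Fin 3 → k) :=
    (LinearMap.proj 1).smulRight b + (LinearMap.proj 2).smulRight c with hLdef
  have hLapply : ∀ v : Fin 3 → k, L v = v 1 • b + v 2 • c := fun v => rfl
  have hit2 : ∀ v : Fin 3 → k, (⇑L)^[2] v = L (L v) := by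
    intro v; rw [Function.iterate_succ_apply', Function.iterate_one]
  have hit3 : ∀ v : Fin 3 → k, (⇑L)^[3] v = L (L (L v)) := by
    intro v; rw [Function.iterate_succ_apply', hit2]
  have hD_lin : ∀ v : Fin 3 → k, D (lin v) = lin (L v) := by
    intro v
    rw [lin_apply, map_sum]
    simp only [Derivation.map_smul]
    rw [Fin.sum_univ_three, hU, hb, hc, smul_zero, zero_add, hLapply, map_add,
      map_smul, map_smul]
  have hDiter : ∀ (n : ℕ) (v : Fin 3 → k), (⇑D)^[n] (lin v) = lin ((⇑L)^[n] v) := by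
    intro n
    induction n with
    | zero => intro v; rfl
    | succ n ih =>
        intro v
        rw [Function.iterate_succ_apply, Function.iterate_succ_apply, hD_lin, ih]
  have hinj : ∀ v : Fin 3 → k, lin v = 0 → v = 0 := fun v h => (lin_eq_zero_iff v).mp h
  have hnil : ∀ v : Fin 3 → k, ∃ n, (⇑L)^[n] v = 0 := by
    intro v
    obtain ⟨n, hn⟩ := hlnd (lin v)
    exact ⟨n, hinj _ (by rw [← hDiter, hn])⟩
  by_cases hcrit : ∀ v : Fin 3 → k, (⇑L)^[2] v = 0
  · -- degenerate case: D would be zero, contradicting irreducibility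
    exfalso
    have hLe1 : L (Pi.single (1 : Fin 3) (1 : k)) = b := by
      rw [hLapply]; simp
    have hLe2 : L (Pi.single (2 : Fin 3) (1 : k)) = c := by
      rw [hLapply]; simp
    have hLb : L b = 0 := by
      have := hcrit (Pi.single (1 : Fin 3) (1 : k))
      rwa [hit2, hLe1] at this
    have hLc : L c = 0 := by
      have := hcrit (Pi.single (2 : Fin 3) (1 : k))
      rwa [hit2, hLe2] at this
    obtain ⟨β, hβ⟩ := ker1 (lin b) (by rw [hD_lin, hLb, map_zero]) (lin_homog b)
    obtain ⟨γ, hγ⟩ := ker1 (lin c) (by rw [hD_lin, hLc, map_zero]) (lin_homog c)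
    have hDg : D (γ • X 1 - β • X 2) = 0 := by
      rw [map_sub, Derivation.map_smul, Derivation.map_smul, hb, hc, hβ, hγ,
        smul_eq_C_mul, smul_eq_C_mul]
      ring
    have hghom : (γ • X 1 - β • X 2 : MvPolynomial (Fin 3) k).IsHomogeneous 1 := by
      apply MvPolynomial.IsHomogeneous.sub <;>
        · rw [smul_eq_C_mul]; exact (isHomogeneous_X _ _).C_mul _
    obtain ⟨μ, hμ⟩ := ker1 _ hDg hghom
    have hγ0 : γ = 0 := by
      have h := congrArg (coeff (Finsupp.single 1 1)) hμ
      rw [coeff_sub, MvPolynomial.coeff_smul, MvPolynomial.coeff_smul, coeff_C_mul,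
        coeff_X', coeff_X', coeff_X', if_pos rfl, if_neg, if_neg] at h
      · simpa using h
      · intro hc'
        have := DFunLike.congr_fun hc' (0 : Fin 3)
        simp [Finsupp.single_apply] at this
      · intro hc'
        have := DFunLike.congr_fun hc' (1 : Fin 3)
        simp [Finsupp.single_apply] at this
    have hβ0 : β = 0 := by
      have h := congrArg (coeff (Finsupp.single 2 1)) hμ
      rw [coeff_sub, MvPolynomial.coeff_smul, MvPolynomial.coeff_smul, coeff_C_mul,
        coeff_X', coeff_X', coeff_X', if_pos rfl, if_neg, if_neg] at h
      · simpa using h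
      · intro hc'
        have := DFunLike.congr_fun hc' (0 : Fin 3)
        simp [Finsupp.single_apply] at this
      · intro hc'
        have := DFunLike.congr_fun hc' (1 : Fin 3)
        simp [Finsupp.single_apply] at this
    have hDX : ∀ i : Fin 3, D (X i) = 0 := by
      intro i
      fin_cases i
      · exact hU
      · show D (X 1) = 0
        rw [hb, hβ, hβ0, map_zero, zero_mul]
      · show D (X 2) = 0
        rw [hc, hγ, hγ0, map_zero, zero_mul]
    have hD0 : ∀ f : MvPolynomial (Fin 3) k, D f = 0 := by
      intro f
      induction f using MvPolynomial.induction_on with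
      | C a =>
          have := Derivation.map_algebraMap D a
          rwa [MvPolynomial.algebraMap_eq] at this
      | add f g hf hg => rw [map_add, hf, hg, add_zero]
      | mul_X f i hf => rw [Derivation.leibniz, hDX, hf, smul_zero, smul_zero, add_zero]
    have hunit : IsUnit (0 : MvPolynomial (Fin 3) k) := by
      apply hirr
      rw [Ideal.span_le]
      rintro y ⟨f, rfl⟩
      rw [hD0 f]
      exact SetLike.mem_coe.mpr (Ideal.zero_mem _)
    exact not_isUnit_zero hunit
  · push_neg at hcrit
    obtain ⟨z, hz⟩ := hcrit
    have hex : ∃ n, (⇑L)^[n] z = 0 := hnil z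
    have hNspec : (⇑L)^[Nat.find hex] z = 0 := Nat.find_spec hex
    have hNmin : ∀ m, m < Nat.find hex → (⇑L)^[m] z ≠ 0 := fun m hm => Nat.find_min hex hm
    have hN3 : 3 ≤ Nat.find hex := by
      by_contra h
      push_neg at h
      apply hz
      have he : (⇑L)^[2] z = (⇑L)^[2 - Nat.find hex] ((⇑L)^[Nat.find hex] z) := by
        rw [← Function.iterate_add_apply]
        congr 1
        omega
      rw [he, hNspec]
      exact Function.iterate_fixed (map_zero L) _
    set z' : Fin 3 → k := (⇑L)^[Nat.find hex - 3] z with hz'def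
    have h2 : (⇑L)^[2] z' ≠ 0 := by
      have he : (⇑L)^[2] z' = (⇑L)^[Nat.find hex - 1] z := by
        rw [hz'def, ← Function.iterate_add_apply]
        congr 1
        omega
      rw [he]
      exact hNmin _ (by omega)
    have h3 : (⇑L)^[3] z' = 0 := by
      have he : (⇑L)^[3] z' = (⇑L)^[Nat.find hex] z := by
        rw [hz'def, ← Function.iterate_add_apply]
        congr 1
        omega
      rw [he, hNspec]
    set y : Fin 3 → k := L z' with hydef
    set x : Fin 3 → k := L y with hxdef
    have hLx : L x = 0 := by
      have := h3
      rwa [hit3] at this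
    have hxne : x ≠ 0 := by
      intro h
      apply h2
      rw [hit2]
      exact h
    have hlinx_ne : lin x ≠ 0 := fun h => hxne (hinj x h)
    have hDlinx : D (lin x) = 0 := by rw [hD_lin, hLx, map_zero]
    obtain ⟨lam, hlam⟩ := ker1 _ hDlinx (lin_homog x)
    have hlamne : lam ≠ 0 := by
      intro h
      apply hlinx_ne
      rw [hlam, h, map_zero, zero_mul]
    have hDliny : D (lin y) = lin x := by rw [hD_lin]
    have hDlinz' : D (lin z') = lin y := by rw [hD_lin]
    set Q : MvPolynomial (Fin 3) k := lin y * lin y - C 2 * (lin x * lin z') with hQdef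
    have hDQ : D Q = 0 := by
      rw [hQdef, map_sub, ← smul_eq_C_mul, Derivation.map_smul, Derivation.leibniz,
        Derivation.leibniz, hDliny, hDlinz', hDlinx]
      simp only [smul_eq_mul, smul_eq_C_mul, map_ofNat]
      ring
    have hQhom : Q.IsHomogeneous 2 := by
      rw [hQdef]
      apply MvPolynomial.IsHomogeneous.sub
      · exact (lin_homog y).mul (lin_homog y)
      · exact ((lin_homog x).mul (lin_homog z')).C_mul _
    obtain ⟨a, bb, hab⟩ := ker2 Q hDQ hQhom
    have hX0 : (X 0 : MvPolynomial (Fin 3) k) = C lam⁻¹ * lin x := by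
      rw [hlam, ← mul_assoc, ← map_mul, inv_mul_cancel₀ hlamne, map_one, one_mul]
    by_cases hbb : bb = 0
    · exfalso
      have hind : LinearIndependent k ![x, y, z'] := by
        rw [Fintype.linearIndependent_iff]
        intro g hg
        rw [Fin.sum_univ_three] at hg
        simp only [Matrix.cons_val_zero, Matrix.cons_val_one, Matrix.head_cons] at hg
        have hg' : g 0 • x + g 1 • y + g 2 • z' = 0 := by
          convert hg using 3
          all_goals simp
        have h1 := congrArg L hg'
        rw [map_add, map_add, map_smul, map_smul, map_smul, hLx, smul_zero, zero_add,
          map_zero] at h1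
        -- h1 : g 1 • x + g 2 • y = 0  (since L y = x, L z' = y)
        have h2' := congrArg L h1
        rw [map_add, map_smul, map_smul, hLx, smul_zero, zero_add, map_zero] at h2'
        -- h2' : g 2 • x = 0
        have hg2 : g 2 = 0 := by
          rcases smul_eq_zero.mp h2' with h | h
          · exact h
          · exact absurd h hxne
        have hg1 : g 1 = 0 := by
          rw [hg2, zero_smul, add_zero] at h1
          rcases smul_eq_zero.mp h1 with h | h
          · exact h
          · exact absurd h hxne
        have hg0 : g 0 = 0 := by
          rw [hg1, hg2, zero_smul, zero_smul, add_zero, add_zero] at hg'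
          rcases smul_eq_zero.mp hg' with h | h
          · exact h
          · exact absurd h hxne
        intro i
        fin_cases i <;> assumption
      obtain ⟨σ, hσ⟩ := exists_coordsys _ hind
      have hQ' : lin y * lin y - C 2 * (lin x * lin z')
          = C a * (C lam⁻¹ * lin x) ^ 2 := by
        rw [← hX0, ← hQdef, hab, hbb, map_zero, zero_mul, add_zero]
      have hsx : σ.symm (lin x) = X 0 := by
        rw [AlgEquiv.symm_apply_eq]
        have := hσ 0
        simpa using this.symm
      have hsy : σ.symm (lin y) = X 1 := by
        rw [AlgEquiv.symm_apply_eq]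
        have := hσ 1
        simpa using this.symm
      have hsz : σ.symm (lin z') = X 2 := by
        rw [AlgEquiv.symm_apply_eq]
        have := hσ 2
        simpa using this.symm
      have hsC : ∀ r : k, σ.symm (C r) = C r := by
        intro r
        have := σ.symm.commutes r
        rwa [MvPolynomial.algebraMap_eq] at this
      have hE := congrArg σ.symm hQ'
      simp only [map_sub, map_mul, map_pow, hsC, hsx, hsy, hsz] at hE
      have hev := congrArg (eval ![(0:k), 1, 0]) hE
      simp at hev
    · -- main construction
      obtain ⟨t, htdef⟩ : ∃ t : k, t = a * lam⁻¹ * lam⁻¹ := ⟨_, rfl⟩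
      obtain ⟨w, hwdef⟩ : ∃ w : Fin 3 → k, w = (-2 : k) • z' + (-t) • x := ⟨_, rfl⟩
      have hLw : L w = (-2 : k) • y := by
        rw [hwdef, map_add, map_smul, map_smul, hLx, smul_zero, add_zero]
      have hLLw : L (L w) = (-2 : k) • x := by rw [hLw, map_smul]
      have hLLLw : L (L (L w)) = 0 := by rw [hLLw, map_smul, hLx, smul_zero]
      have hind : LinearIndependent k ![x, y, w] := by
        rw [Fintype.linearIndependent_iff]
        intro g hg
        rw [Fin.sum_univ_three] at hg
        simp only [Matrix.cons_val_zero, Matrix.cons_val_one, Matrix.head_cons] at hg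
        have hg' : g 0 • x + g 1 • y + g 2 • w = 0 := by
          convert hg using 3
          all_goals simp
        have h1 := congrArg L hg'
        rw [map_add, map_add, map_smul, map_smul, map_smul, hLx, smul_zero, zero_add,
          hLw, map_zero] at h1
        -- h1 : g 1 • x + g 2 • ((-2) • y) = 0
        have h2' := congrArg L h1
        rw [map_add, map_smul, map_smul, hLx, smul_zero, zero_add, map_smul, map_zero] at h2'
        -- h2' : g 2 • ((-2) • x) = 0
        have hg2 : g 2 = 0 := by
          rw [smul_smul] at h2'
          rcases smul_eq_zero.mp h2' with h | h
          · rcases mul_eq_zero.mp h with h' | h'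
            · exact h'
            · norm_num at h'
          · exact absurd h hxne
        have hg1 : g 1 = 0 := by
          rw [hg2, zero_smul, add_zero] at h1
          rcases smul_eq_zero.mp h1 with h | h
          · exact h
          · exact absurd h hxne
        have hg0 : g 0 = 0 := by
          rw [hg1, hg2, zero_smul, zero_smul, add_zero, add_zero] at hg'
          rcases smul_eq_zero.mp hg' with h | h
          · exact h
          · exact absurd h hxne
        intro i
        fin_cases i <;> assumption
      obtain ⟨σ, hσ⟩ := exists_coordsys _ hind
      refine ⟨![lin x, lin y, lin w], ⟨σ, ?_⟩, ?_, ?_, ⟨1, 2, one_pos, one_lt_two, ?_, ?_⟩,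
        ⟨bb⁻¹, inv_ne_zero hbb, ?_⟩⟩
      · intro i
        have := hσ i
        fin_cases i <;> simpa using this
      · intro i
        fin_cases i <;> simp <;> exact lin_homog _
      · simpa using hDlinx
      · constructor
        · simp only [Matrix.cons_val_one, Matrix.head_cons, Function.iterate_one, Matrix.cons_val_zero]
          rw [hDliny]
          exact hlinx_ne
        · simp only [Matrix.cons_val_one, Matrix.head_cons, Matrix.cons_val_zero]
          rw [hDiter 2 y, hit2, hLx, map_zero]
      · have hV2 : (![lin x, lin y, lin w] : Fin 3 → MvPolynomial (Fin 3) k) 2 = lin w := by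
          simp
        constructor
        · rw [hV2, hDiter 2 w, hit2, hLLw, map_smul]
          exact smul_ne_zero (by norm_num) hlinx_ne
        · rw [hV2, hDiter 3 w, hit3, hLLLw, map_zero]
      · have hV0 : (![lin x, lin y, lin w] : Fin 3 → MvPolynomial (Fin 3) k) 0 = lin x := by
          simp
        have hV1 : (![lin x, lin y, lin w] : Fin 3 → MvPolynomial (Fin 3) k) 1 = lin y := by
          simp
        have hV2 : (![lin x, lin y, lin w] : Fin 3 → MvPolynomial (Fin 3) k) 2 = lin w := by
          simp
        rw [hV0, hV1, hV2]
        have hlw : lin w = C (-2 : k) * lin z' + C (-t) * lin x := by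
          rw [hwdef, map_add, map_smul, map_smul, smul_eq_C_mul, smul_eq_C_mul]
        have hkey : (lin y) ^ 2 + lin x * lin w = C bb * P := by
          have e1 : (lin y) ^ 2 + lin x * lin w
              = Q - C t * (lin x * lin x) := by
            rw [hQdef, hlw, map_neg, map_neg]
            ring
          have e2 : C t * (lin x * lin x) = C a * X 0 ^ 2 := by
            have h2 : t * lam * lam = a := by
              rw [htdef]
              field_simp
            rw [hlam, ← h2, map_mul, map_mul]
            ring
          rw [e1, e2, hab]
          ring
        rw [hkey, ← mul_assoc, ← map_mul, inv_mul_cancel₀ hbb, map_one, one_mul]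
end

section
/- Let k be a field of characteristic zero, B = k[X,Y,Z], D ∈ LND(B) with kernel A, and suppose deg_D(Z) = n > 0. Let π : B → B/ZB be the quotient map. If there is an integer m < n such that the degree module F_m = {b ∈ B : deg_D(b) ≤ m} satisfies π(F_m) = k[X,Y] (all of B/ZB), then B = Σ_{i ≥ 0} F_m · Z^i. -/
open Finset

theorem iterD_zero_mono {k B : Type*} [CommRing k] [CommRing B] [Algebra k B]
    (D : Derivation k B B) {b : B} {j K : ℕ} (h : (⇑D)^[j] b = 0) (hjk : j ≤ K) :
    (⇑D)^[K] b = 0 := by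
  obtain ⟨t, rfl⟩ := Nat.exists_eq_add_of_le hjk
  rw [Nat.add_comm, Function.iterate_add_apply, h]
  exact Function.iterate_fixed (map_zero D) t

theorem iterD_sub {k B : Type*} [CommRing k] [CommRing B] [Algebra k B]
    (D : Derivation k B B) (x y : B) (d : ℕ) :
    (⇑D)^[d] (x - y) = (⇑D)^[d] x - (⇑D)^[d] y := by
  induction d with
  | zero => simp
  | succ d ih => rw [Function.iterate_succ_apply', Function.iterate_succ_apply',
      Function.iterate_succ_apply', ih, map_sub]

theorem iterD_leibniz {k B : Type*} [CommRing k] [CommRing B] [Algebra k B]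
    (D : Derivation k B B) (a b : B) (N : ℕ) :
    (⇑D)^[N] (a * b) =
      ∑ i ∈ Finset.range (N + 1),
        (N.choose i) • ((⇑D)^[i] a * (⇑D)^[N - i] b) := by
  induction N with
  | zero => simp
  | succ N ih =>
    rw [Function.iterate_succ_apply', ih, map_sum]
    have step : ∀ i ∈ Finset.range (N + 1),
        ⇑D ((N.choose i) • ((⇑D)^[i] a * (⇑D)^[N - i] b)) =
        (N.choose i) • ((⇑D)^[i + 1] a * (⇑D)^[N + 1 - (i + 1)] b)
          + (N.choose i) • ((⇑D)^[i] a * (⇑D)^[N + 1 - i] b) := by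
      intro i hi
      rw [Finset.mem_range] at hi
      have h1 : N + 1 - (i + 1) = N - i := by omega
      have h2 : N + 1 - i = (N - i) + 1 := by omega
      rw [h1, h2, map_nsmul, Derivation.leibniz, smul_eq_mul, smul_eq_mul,
        Function.iterate_succ_apply', Function.iterate_succ_apply', ← smul_add]
      congr 1
      ring
    rw [Finset.sum_congr rfl step, Finset.sum_add_distrib]
    -- goal RHS manipulation
    rw [Finset.sum_range_succ' (fun i => ((N+1).choose i) • ((⇑D)^[i] a * (⇑D)^[N + 1 - i] b)) (N+1)]
    have pascal : ∀ i, (N + 1).choose (i + 1) = N.choose i + N.choose (i + 1) :=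
      fun i => Nat.choose_succ_succ N i
    have : ∑ i ∈ Finset.range (N + 1),
        ((N + 1).choose (i + 1)) • ((⇑D)^[i + 1] a * (⇑D)^[N + 1 - (i + 1)] b)
        = ∑ i ∈ Finset.range (N + 1),
            ((N.choose i) • ((⇑D)^[i + 1] a * (⇑D)^[N + 1 - (i + 1)] b)
              + (N.choose (i + 1)) • ((⇑D)^[i + 1] a * (⇑D)^[N + 1 - (i + 1)] b)) := by
      refine Finset.sum_congr rfl fun i hi => ?_
      rw [pascal, add_smul]
    rw [this, Finset.sum_add_distrib, add_assoc]
    congr 1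
    -- remains: ∑ C(N,i)•T i = ∑_{i<N+1} C(N,i+1)•T(i+1) + C(N+1,0)•T 0
    rw [Finset.sum_range_succ (fun i => (N.choose (i+1)) • ((⇑D)^[i + 1] a * (⇑D)^[N + 1 - (i + 1)] b)) N]
    simp only [Nat.choose_self, Nat.choose_succ_self, zero_smul, add_zero, Nat.choose_zero_right, one_smul]
    rw [Finset.sum_range_succ' (fun i => (N.choose i) • ((⇑D)^[i] a * (⇑D)^[N + 1 - i] b)) N]
    simp

theorem iterD_mul_ne {k B : Type*} [Field k] [CharZero k] [CommRing B] [IsDomain B]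
    [Algebra k B] [CharZero B]
    (D : Derivation k B B) {a b : B} {p q : ℕ}
    (ha : (⇑D)^[p] a ≠ 0 ∧ (⇑D)^[p + 1] a = 0)
    (hb : (⇑D)^[q] b ≠ 0 ∧ (⇑D)^[q + 1] b = 0) :
    (⇑D)^[p + q] (a * b) ≠ 0 := by
  rw [iterD_leibniz]
  have key : ∀ i ∈ Finset.range (p + q + 1), i ≠ p →
      ((p + q).choose i) • ((⇑D)^[i] a * (⇑D)^[p + q - i] b) = 0 := by
    intro i hi hip
    rcases lt_or_gt_of_ne hip with h | h
    · have : (⇑D)^[p + q - i] b = 0 := iterD_zero_mono D hb.2 (by omega)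
      rw [this, mul_zero, smul_zero]
    · have : (⇑D)^[i] a = 0 := iterD_zero_mono D ha.2 (by omega)
      rw [this, zero_mul, smul_zero]
  rw [Finset.sum_eq_single_of_mem p (by simp) key]
  have h1 : (⇑D)^[p] a * (⇑D)^[p + q - p] b ≠ 0 := by
    rw [Nat.add_sub_cancel_left]
    exact mul_ne_zero ha.1 hb.1
  have h2 : ((p + q).choose p) ≠ 0 := by
    have := Nat.choose_pos (show p ≤ p + q by omega); omega
  simpa [nsmul_eq_mul] using mul_ne_zero (Nat.cast_ne_zero.mpr h2) h1
open MvPolynomial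

/-- Lemma 4.6: if `deg_D Z = n > 0` and some degree module `F_m` with `m < n`
surjects onto `B/ZB`, then `B = Σ_{i≥0} F_m Z^i`. -/
theorem degree_module_generates {k : Type*} [Field k] [CharZero k]
    (D : Derivation k (MvPolynomial (Fin 3) k) (MvPolynomial (Fin 3) k))
    (hlnd : IsLND D)
    (n : ℕ) (hn : 0 < n) (hZ : ndeg D (X 2) n)
    (m : ℕ) (hm : m < n)
    (hsurj : ∀ y : MvPolynomial (Fin 3) k ⧸
        Ideal.span ({X 2} : Set (MvPolynomial (Fin 3) k)),
      ∃ b : MvPolynomial (Fin 3) k, (⇑D)^[m + 1] b = 0 ∧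
        Ideal.Quotient.mk (Ideal.span ({X 2} : Set (MvPolynomial (Fin 3) k))) b = y) :
    ∀ b : MvPolynomial (Fin 3) k,
      ∃ (N : ℕ) (f : ℕ → MvPolynomial (Fin 3) k),
        (∀ i, (⇑D)^[m + 1] (f i) = 0) ∧
        b = ∑ i ∈ Finset.range N, f i * (X 2) ^ i := by

  classical
  have instCZ : CharZero (MvPolynomial (Fin 3) k) := inferInstance
  intro b
  obtain ⟨K, hK⟩ := hlnd b
  suffices H : ∀ d : ℕ, ∀ b : MvPolynomial (Fin 3) k, (⇑D)^[d] b = 0 →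
      ∃ (N : ℕ) (f : ℕ → MvPolynomial (Fin 3) k),
        (∀ i, (⇑D)^[m + 1] (f i) = 0) ∧
        b = ∑ i ∈ Finset.range N, f i * (X 2) ^ i from H K b hK
  intro d
  induction d using Nat.strong_induction_on with
  | _ d ih =>
    intro b hb
    by_cases hd : d ≤ m + 1
    · refine ⟨1, fun _ => b, fun i => iterD_zero_mono D hb hd, ?_⟩
      simp
    · push_neg at hd
      obtain ⟨f₀, hf₀, hπ⟩ := hsurj (Ideal.Quotient.mk _ b)
      have hmem : b - f₀ ∈ Ideal.span ({X 2} : Set (MvPolynomial (Fin 3) k)) := by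
        rw [← Ideal.Quotient.eq_zero_iff_mem, RingHom.map_sub, hπ, sub_self]
      obtain ⟨b₁, hb₁⟩ := Ideal.mem_span_singleton.mp hmem
      by_cases hb₁0 : b₁ = 0
      · refine ⟨1, fun _ => f₀, fun i => hf₀, ?_⟩
        have : b = f₀ := by
          rw [hb₁0, mul_zero] at hb₁
          exact sub_eq_zero.mp hb₁
        simp [this]
      · have hex : ∃ j, (⇑D)^[j] b₁ = 0 := hlnd b₁
        set d₁ := Nat.find hex with hd₁def
        have hspec : (⇑D)^[d₁] b₁ = 0 := Nat.find_spec hex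
        have hd₁pos : 1 ≤ d₁ := by
          rcases Nat.eq_zero_or_pos d₁ with h | h
          · exfalso; apply hb₁0; simpa [h] using hspec
          · exact h
        have hmin : (⇑D)^[d₁ - 1] b₁ ≠ 0 := Nat.find_min hex (by omega)
        have hne : (⇑D)^[n + (d₁ - 1)] (X 2 * b₁) ≠ 0 := by
          refine iterD_mul_ne D ⟨hZ.1, hZ.2⟩ ⟨hmin, ?_⟩
          rwa [Nat.sub_add_cancel hd₁pos]
        have hDd : (⇑D)^[d] (X 2 * b₁) = 0 := by
          rw [← hb₁, iterD_sub, hb, iterD_zero_mono D hf₀ (by omega), sub_zero]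
        have hlt : n + (d₁ - 1) < d := by
          by_contra hcon
          exact hne (iterD_zero_mono D hDd (by omega))
        obtain ⟨N₁, f₁, hf₁, hsum⟩ := ih d₁ (by omega) b₁ hspec
        refine ⟨N₁ + 1, fun i => if i = 0 then f₀ else f₁ (i - 1), ?_, ?_⟩
        · intro i
          by_cases h : i = 0 <;> simp [h, hf₀, hf₁]
        · have hbeq : b = f₀ + X 2 * b₁ := by
            rw [← hb₁]; ring
          rw [hbeq, Finset.sum_range_succ']
          simp only [if_pos rfl, Nat.add_sub_cancel]
          rw [pow_zero, mul_one, add_comm]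
          congr 1
          rw [hsum, Finset.mul_sum]
          refine Finset.sum_congr rfl fun i hi => ?_
          rw [if_neg (Nat.succ_ne_zero i)]
          ring
end

section
/- Let B be an integral domain of characteristic zero, D a locally nilpotent derivation on B, A = ker(D), and M an A-submodule of B generated by finitely many elements m₁, …, m_n. Suppose there exists h ∈ B with deg_D(m_i) < deg_D(h) for all i. Then the A-module M' = Σ_{i ≥ 0} M·h^i is a direct sum: M' = ⊕_{i ≥ 0} M·h^i. -/
section Aux

variable {k B : Type*} [CommRing k] [CommRing B] [Algebra k B] (D : Derivation k B B)

lemma iter_add' (t : ℕ) (a b : B) :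
    (⇑D)^[t] (a + b) = (⇑D)^[t] a + (⇑D)^[t] b := by
  induction t generalizing a b with
  | zero => simp
  | succ t ih => simp [Function.iterate_succ_apply, ih]

lemma iter_zero' (t : ℕ) : (⇑D)^[t] (0 : B) = 0 := by
  induction t with
  | zero => simp
  | succ t ih => simp [Function.iterate_succ_apply, ih]

lemma iter_sum {ι : Type*} (t : ℕ) (s : Finset ι) (f : ι → B) :
    (⇑D)^[t] (∑ i ∈ s, f i) = ∑ i ∈ s, (⇑D)^[t] (f i) := by
  classical
  induction s using Finset.induction with
  | empty => simpa using iter_zero' D t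
  | insert a s hx ih => simp [Finset.sum_insert hx, iter_add', ih]

lemma iter_mul_ker (t : ℕ) (a b : B) (ha : D a = 0) :
    (⇑D)^[t] (a * b) = a * (⇑D)^[t] b := by
  induction t generalizing b with
  | zero => simp
  | succ t ih =>
    rw [Function.iterate_succ_apply, Derivation.leibniz, smul_eq_mul, smul_eq_mul, ha,
      mul_zero, add_zero, ih, Function.iterate_succ_apply]

lemma iter_leibniz (t : ℕ) (a b : B) :
    (⇑D)^[t] (a * b)
      = ∑ j ∈ Finset.range (t + 1),
          (t.choose j) • ((⇑D)^[j] a * (⇑D)^[t - j] b) := by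
  induction t generalizing a b with
  | zero => simp
  | succ t ih =>
    rw [Function.iterate_succ_apply, Derivation.leibniz, smul_eq_mul, smul_eq_mul,
      mul_comm b (D a), iter_add', ih, ih]
    set f : ℕ → B := fun j => (⇑D)^[j] a * (⇑D)^[t + 1 - j] b with hf
    have h1 : ∑ j ∈ Finset.range (t + 1),
        (t.choose j) • ((⇑D)^[j] a * (⇑D)^[t - j] (D b))
        = ∑ j ∈ Finset.range t, (t.choose (j+1)) • f (j+1) + f 0 := by
      have : ∑ j ∈ Finset.range (t + 1),
          (t.choose j) • ((⇑D)^[j] a * (⇑D)^[t - j] (D b))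
          = ∑ j ∈ Finset.range (t + 1), (t.choose j) • f j := by
        refine Finset.sum_congr rfl fun j hj => ?_
        rw [Finset.mem_range] at hj
        rw [← Function.iterate_succ_apply (⇑D) (t - j) b, hf]
        congr 3
        omega
      rw [this, Finset.sum_range_succ']
      simp
    have h2 : ∑ j ∈ Finset.range (t + 1),
        (t.choose j) • ((⇑D)^[j] (D a) * (⇑D)^[t - j] b)
        = ∑ j ∈ Finset.range (t + 1), (t.choose j) • f (j + 1) := by
      refine Finset.sum_congr rfl fun j hj => ?_
      rw [Finset.mem_range] at hj
      rw [← Function.iterate_succ_apply (⇑D) j a, hf]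
      simp only [Nat.succ_sub_succ]
    have h3 : ∑ j ∈ Finset.range t, (t.choose (j+1)) • f (j+1)
        = ∑ j ∈ Finset.range (t+1), (t.choose (j+1)) • f (j+1) := by
      rw [Finset.sum_range_succ, Nat.choose_succ_self, zero_smul, add_zero]
    rw [h1, h2, h3, Finset.sum_range_succ' (fun j => ((t+1).choose j) • f j) (t+1)]
    simp only [Nat.choose_succ_succ, add_smul, Nat.choose_zero_right, one_smul,
      Finset.sum_add_distrib]
    ring

lemma iter_eventually_zero (s t : ℕ) (a : B) (hs : (⇑D)^[s] a = 0) (hst : s ≤ t) :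
    (⇑D)^[t] a = 0 := by
  obtain ⟨u, rfl⟩ := Nat.exists_eq_add_of_le hst
  rw [add_comm, Function.iterate_add_apply, hs, iter_zero' D u]

lemma iter_mul_vanish (p q : ℕ) (a b : B)
    (ha : (⇑D)^[p + 1] a = 0) (hb : (⇑D)^[q + 1] b = 0) :
    (⇑D)^[p + q + 1] (a * b) = 0 := by
  rw [iter_leibniz]
  refine Finset.sum_eq_zero fun j hj => ?_
  rw [Finset.mem_range] at hj
  rcases le_or_gt j p with hjp | hjp
  · have : (⇑D)^[p + q + 1 - j] b = 0 :=
      iter_eventually_zero D (q+1) _ b hb (by omega)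
    rw [this, mul_zero, smul_zero]
  · have : (⇑D)^[j] a = 0 := iter_eventually_zero D (p+1) _ a ha (by omega)
    rw [this, zero_mul, smul_zero]

lemma iter_mul_top (p q : ℕ) (a b : B)
    (ha : (⇑D)^[p + 1] a = 0) (hb : (⇑D)^[q + 1] b = 0) :
    (⇑D)^[p + q] (a * b) = ((p+q).choose p) • ((⇑D)^[p] a * (⇑D)^[q] b) := by
  rw [iter_leibniz]
  rw [Finset.sum_eq_single p]
  · rw [Nat.add_sub_cancel_left]
  · intro j hj hne
    rw [Finset.mem_range] at hj
    rcases lt_or_lt_iff_ne.mpr hne with hjp | hjp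
    · have : (⇑D)^[p + q - j] b = 0 :=
        iter_eventually_zero D (q+1) _ b hb (by omega)
      rw [this, mul_zero, smul_zero]
    · have : (⇑D)^[j] a = 0 := iter_eventually_zero D (p+1) _ a ha (by omega)
      rw [this, zero_mul, smul_zero]
  · intro hp; exact absurd (Finset.mem_range.mpr (by omega)) hp

end Aux

section Dom

variable {k B : Type*} [CommRing k] [CommRing B] [IsDomain B] [CharZero B]
  [Algebra k B] (D : Derivation k B B)

/-- `h^i` has `D`-degree `i * dh` when `h` has degree `dh`. -/
lemma pow_ndeg (h : B) (dh : ℕ) (hdh : (⇑D)^[dh] h ≠ 0 ∧ (⇑D)^[dh + 1] h = 0) (i : ℕ) :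
    (⇑D)^[i * dh] (h ^ i) ≠ 0 ∧ (⇑D)^[i * dh + 1] (h ^ i) = 0 := by
  induction i with
  | zero =>
    constructor
    · simpa using one_ne_zero
    · simp
  | succ i ih =>
    have e : (i + 1) * dh = i * dh + dh := by ring
    constructor
    · rw [e, pow_succ, iter_mul_top D (i * dh) dh _ _ ih.2 hdh.2, nsmul_eq_mul]
      exact mul_ne_zero (Nat.cast_ne_zero.mpr
        (Nat.choose_pos (Nat.le_add_right _ _)).ne') (mul_ne_zero ih.1 hdh.1)
    · rw [e, pow_succ]
      exact iter_mul_vanish D (i * dh) dh _ _ ih.2 hdh.2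

end Dom

/-- Freudenburg's freeness lemma, part (a): if `M` is the `A`-submodule of `B`
generated by `m₁, …, m_n` (`A = ker D`) and `h ∈ B` satisfies
`deg_D(m_j) < deg_D(h)` for all `j`, then the sum `Σ_{i≥0} M h^i` is direct:
any vanishing finite sum `Σ x_i h^i` with `x_i ∈ M` has all `x_i = 0`. -/
theorem freeness_lemma_direct_sum {k B : Type*} [Field k] [CharZero k]
    [CommRing B] [IsDomain B] [Algebra k B]
    (D : Derivation k B B) (hlnd : IsLND D)
    (n : ℕ) (m : Fin n → B) (h : B) (dh : ℕ)
    (hdh : ndeg D h dh)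
    (hm : ∀ j : Fin n, (⇑D)^[dh] (m j) = 0)
    (x : ℕ → B)
    (hx : ∀ i : ℕ, ∃ a : Fin n → B, (∀ j, D (a j) = 0) ∧ x i = ∑ j, a j * m j)
    (N : ℕ) (hsum : ∑ i ∈ Finset.range N, x i * h ^ i = 0) :
    ∀ i ∈ Finset.range N, x i = 0 := by
  haveI : CharZero B := charZero_of_injective_algebraMap (algebraMap k B).injective
  obtain ⟨hdh1, hdh2⟩ := hdh
  -- D-degree of each x i is < dh
  have hxd : ∀ i : ℕ, (⇑D)^[dh] (x i) = 0 := by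
    intro i
    obtain ⟨a, ha, hxi⟩ := hx i
    rw [hxi, iter_sum]
    exact Finset.sum_eq_zero fun j _ => by rw [iter_mul_ker D dh _ _ (ha j), hm j, mul_zero]
  -- dh = 0 is degenerate: all x i = 0
  rcases Nat.eq_zero_or_pos dh with hdh0 | hdhpos
  · intro i _
    have := hxd i
    rwa [hdh0, Function.iterate_zero_apply] at this
  -- main case: induction on N
  classical
  revert hsum
  induction N with
  | zero => intro _; simp
  | succ N ih =>
    intro hsum
    have hxN : x N = 0 := by
      by_contra hne
      have hex : ∃ q, (⇑D)^[q] (x N) = 0 := ⟨dh, hxd N⟩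
      have hq0 : Nat.find hex ≠ 0 := by
        intro h0
        have := Nat.find_spec hex
        rw [h0, Function.iterate_zero_apply] at this
        exact hne this
      set p := Nat.find hex - 1 with hp
      have hp1 : (⇑D)^[p + 1] (x N) = 0 := by
        have := Nat.find_spec hex
        rwa [show p + 1 = Nat.find hex by omega]
      have hpne : (⇑D)^[p] (x N) ≠ 0 := Nat.find_min hex (by omega)
      have hpdh : p + 1 ≤ dh := by
        have := Nat.find_min' hex (hxd N)
        omega
      -- apply D^[p + N*dh] to the sum
      have key := congrArg (⇑D)^[p + N * dh] hsum
      rw [iter_zero', iter_sum, Finset.sum_range_succ] at key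
      have hvanish : ∀ j ∈ Finset.range N, (⇑D)^[p + N * dh] (x j * h ^ j) = 0 := by
        intro j hj
        rw [Finset.mem_range] at hj
        have hv : (⇑D)^[(dh - 1) + j * dh + 1] (x j * h ^ j) = 0 := by
          refine iter_mul_vanish D (dh - 1) (j * dh) _ _ ?_
            (pow_ndeg D h dh ⟨hdh1, hdh2⟩ j).2
          rw [show dh - 1 + 1 = dh by omega]
          exact hxd j
        refine iter_eventually_zero D _ _ _ hv ?_
        have h2 : j * dh + dh ≤ N * dh := by
          have := Nat.mul_le_mul_right dh (show j + 1 ≤ N by omega)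
          simpa [add_mul] using this
        omega
      rw [Finset.sum_eq_zero hvanish, zero_add] at key
      have htop := iter_mul_top D p (N * dh) (x N) (h ^ N) hp1
        (pow_ndeg D h dh ⟨hdh1, hdh2⟩ N).2
      rw [key, nsmul_eq_mul] at htop
      exact (mul_ne_zero (Nat.cast_ne_zero.mpr
        (Nat.choose_pos (Nat.le_add_right _ _)).ne')
        (mul_ne_zero hpne (pow_ndeg D h dh ⟨hdh1, hdh2⟩ N).1)) htop.symm
    rw [Finset.sum_range_succ, hxN, zero_mul, add_zero] at hsum
    intro i hi
    rw [Finset.mem_range] at hi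
    rcases Nat.lt_succ_iff_lt_or_eq.mp hi with hi' | rfl
    · exact ih hsum i (Finset.mem_range.mpr hi')
    · exact hxN
end

section
/- Let k be a field of characteristic zero with algebraic closure k̄, B = k[X,Y,Z], D a locally nilpotent k-derivation on B with kernel A, and D̄ the extension of D to B̄ = k̄[X,Y,Z] with kernel Ā = A ⊗_k k̄. For n ∈ ℕ, let I_n = D^n(B) ∩ A and Ī_n = D̄^n(B̄) ∩ Ā be the n-th image ideals. If Ī_n is a principal ideal of Ā, then I_n is a principal ideal of A. -/
open MvPolynomial

section AuxUnit
open MvPolynomial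

lemma aux_eq_C_of_unit {R : Type*} [CommRing R] [IsDomain R] :
    ∀ {n : ℕ} (p q : MvPolynomial (Fin n) R), p * q = 1 → ∃ r : R, p = C r := by
  intro n
  induction n with
  | zero => intro p q _; exact ⟨p.coeff 0, p.eq_C_of_isEmpty⟩
  | succ n ih =>
    intro p q h
    have h2 : (finSuccEquiv R n p) * (finSuccEquiv R n q) = 1 := by
      rw [← map_mul, h, map_one]
    have hu : IsUnit (finSuccEquiv R n p) := IsUnit.of_mul_eq_one _ h2
    obtain ⟨r, hr, hrp⟩ := Polynomial.isUnit_iff.mp hu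
    obtain ⟨r', hrr'⟩ := hr.exists_right_inv
    obtain ⟨s, hs⟩ := ih r r' hrr'
    refine ⟨s, ?_⟩
    have h4 := congrArg (finSuccEquiv R n).symm hrp
    rw [AlgEquiv.symm_apply_apply] at h4
    have h3 := RingHom.congr_fun (finSuccEquiv_comp_C_eq_C (R := R) n) s
    simp only [RingHom.comp_apply] at h3
    rw [← h4, hs, ← h3]
    rfl

end AuxUnit

section AuxFixed
open Polynomial

lemma aux_fixed_mem_range {k : Type*} [Field k] [CharZero k]
    (μ : AlgebraicClosure k)
    (h : ∀ σ : AlgebraicClosure k ≃ₐ[k] AlgebraicClosure k, σ μ = μ) :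
    ∃ c : k, algebraMap k (AlgebraicClosure k) c = μ := by
  have halg : Algebra.IsAlgebraic k (AlgebraicClosure k) := inferInstance
  have hint : IsIntegral k μ := (halg.isAlgebraic μ).isIntegral
  have hsep : (minpoly k μ).Separable := Algebra.IsSeparable.isSeparable k μ
  have hsplit : Splits ((minpoly k μ).map (algebraMap k (AlgebraicClosure k))) :=
    IsAlgClosed.splits _
  have hcard := Polynomial.card_rootSet_eq_natDegree hsep hsplit
  have hall : ∀ y ∈ (minpoly k μ).rootSet (AlgebraicClosure k), y = μ := by
    intro y hy
    have hy0 : Polynomial.aeval y (minpoly k μ) = 0 := (Polynomial.mem_rootSet.mp hy).2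
    have hconj : IsConjRoot k μ y := isConjRoot_of_aeval_eq_zero hint hy0
    obtain ⟨σ, hσ⟩ := hconj.exists_algEquiv
    exact σ.injective (hσ.trans (h σ).symm)
  have hle : Fintype.card ((minpoly k μ).rootSet (AlgebraicClosure k)) ≤ 1 := by
    refine Fintype.card_le_one_iff.mpr fun a b => ?_
    exact Subtype.ext ((hall a.1 a.2).trans (hall b.1 b.2).symm)
  have hpos : 0 < (minpoly k μ).natDegree := minpoly.natDegree_pos hint
  have h1 : (minpoly k μ).natDegree = 1 := le_antisymm (hcard ▸ hle) hpos
  exact minpoly.natDegree_eq_one_iff.mp h1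

end AuxFixed

section AuxP
open MvPolynomial

variable {k K : Type*} [Field k] [Field K] [Algebra k K]

lemma aux_coeff_sum_monomial {R : Type*} [CommRing R] (s : Finset ((Fin 3) →₀ ℕ))
    (g : ((Fin 3) →₀ ℕ) → R) (m : (Fin 3) →₀ ℕ) :
    coeff m (∑ m' ∈ s, monomial m' (g m')) = if m ∈ s then g m else 0 := by
  classical
  rw [MvPolynomial.coeff_sum]
  simp only [MvPolynomial.coeff_monomial]
  rw [Finset.sum_ite_eq' s m g]

noncomputable def Pmap (p : K →ₗ[k] k) (f : MvPolynomial (Fin 3) K) : MvPolynomial (Fin 3) k :=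
  ∑ m ∈ f.support, monomial m (p (coeff m f))

lemma Pmap_coeff (p : K →ₗ[k] k) (f : MvPolynomial (Fin 3) K) (m : (Fin 3) →₀ ℕ) :
    coeff m (Pmap p f) = p (coeff m f) := by
  classical
  rw [Pmap, aux_coeff_sum_monomial]
  by_cases h : m ∈ f.support
  · simp [h]
  · simp [h, MvPolynomial.notMem_support_iff.mp h]

lemma Pmap_add (p : K →ₗ[k] k) (f g : MvPolynomial (Fin 3) K) :
    Pmap p (f + g) = Pmap p f + Pmap p g := by
  apply MvPolynomial.ext; intro m
  simp [Pmap_coeff, MvPolynomial.coeff_add]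

lemma Pmap_zero (p : K →ₗ[k] k) : Pmap p (0 : MvPolynomial (Fin 3) K) = 0 := by
  apply MvPolynomial.ext; intro m; simp [Pmap_coeff]

lemma Pmap_mul_map (p : K →ₗ[k] k) (y : MvPolynomial (Fin 3) k) (g : MvPolynomial (Fin 3) K) :
    Pmap p (MvPolynomial.map (algebraMap k K) y * g) = y * Pmap p g := by
  apply MvPolynomial.ext; intro m
  rw [Pmap_coeff, MvPolynomial.coeff_mul, MvPolynomial.coeff_mul, map_sum]
  refine Finset.sum_congr rfl fun x _ => ?_
  rw [MvPolynomial.coeff_map, Pmap_coeff]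
  rw [← Algebra.smul_def, map_smul, smul_eq_mul]

lemma Pmap_map (p : K →ₗ[k] k) (hp : ∀ c, p (algebraMap k K c) = c)
    (y : MvPolynomial (Fin 3) k) :
    Pmap p (MvPolynomial.map (algebraMap k K) y) = y := by
  apply MvPolynomial.ext; intro m
  rw [Pmap_coeff, MvPolynomial.coeff_map, hp]

lemma Pmap_C_mul_map (p : K →ₗ[k] k) (lam : K) (y : MvPolynomial (Fin 3) k) :
    Pmap p (C lam * MvPolynomial.map (algebraMap k K) y) = p lam • y := by
  apply MvPolynomial.ext; intro m
  rw [Pmap_coeff, MvPolynomial.coeff_C_mul, MvPolynomial.coeff_map, MvPolynomial.coeff_smul]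
  rw [mul_comm, ← Algebra.smul_def, map_smul]
  simp [mul_comm]

lemma Pmap_derivation (p : K →ₗ[k] k)
    (D : Derivation k (MvPolynomial (Fin 3) k) (MvPolynomial (Fin 3) k))
    (D' : Derivation K (MvPolynomial (Fin 3) K) (MvPolynomial (Fin 3) K))
    (hD' : ∀ f : MvPolynomial (Fin 3) k,
      D' (MvPolynomial.map (algebraMap k K) f)
        = MvPolynomial.map (algebraMap k K) (D f))
    (f : MvPolynomial (Fin 3) K) :
    Pmap p (D' f) = D (Pmap p f) := by
  classical
  let PH : MvPolynomial (Fin 3) K →+ MvPolynomial (Fin 3) k :=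
    { toFun := Pmap p, map_zero' := Pmap_zero p, map_add' := Pmap_add p }
  have key : ∀ m : (Fin 3) →₀ ℕ, ∀ lam : K,
      Pmap p (D' (monomial m lam)) = D (monomial m (p lam)) := by
    intro m lam
    have h1 : (monomial m lam : MvPolynomial (Fin 3) K) = C lam * monomial m 1 := by
      rw [MvPolynomial.C_mul_monomial, mul_one]
    have h2 : (monomial m (1:K) : MvPolynomial (Fin 3) K)
        = MvPolynomial.map (algebraMap k K) (monomial m (1:k)) := by
      simp [MvPolynomial.map_monomial]
    have h3 : (monomial m (p lam) : MvPolynomial (Fin 3) k) = p lam • monomial m 1 := by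
      rw [MvPolynomial.smul_monomial, smul_eq_mul, mul_one]
    rw [h1, ← MvPolynomial.smul_eq_C_mul, Derivation.map_smul,
      MvPolynomial.smul_eq_C_mul, h2, hD', Pmap_C_mul_map, h3, Derivation.map_smul]
  have hsum : D' f = ∑ m ∈ f.support, D' (monomial m (coeff m f)) := by
    conv_lhs => rw [← MvPolynomial.support_sum_monomial_coeff f]
    exact map_sum D'.toLinearMap _ _
  have h4 : Pmap p (D' f) = ∑ m ∈ f.support, D (monomial m (p (coeff m f))) := by
    rw [hsum]
    rw [show Pmap p (∑ m ∈ f.support, D' (monomial m (coeff m f)))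
      = ∑ m ∈ f.support, Pmap p (D' (monomial m (coeff m f))) from map_sum PH _ _]
    exact Finset.sum_congr rfl fun m _ => key m (coeff m f)
  rw [h4]
  have h5 : D (Pmap p f) = ∑ m ∈ f.support, D (monomial m (p (coeff m f))) :=
    map_sum D.toLinearMap _ _
  rw [h5]

lemma Pmap_derivation_iter (p : K →ₗ[k] k)
    (D : Derivation k (MvPolynomial (Fin 3) k) (MvPolynomial (Fin 3) k))
    (D' : Derivation K (MvPolynomial (Fin 3) K) (MvPolynomial (Fin 3) K))
    (hD' : ∀ f : MvPolynomial (Fin 3) k,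
      D' (MvPolynomial.map (algebraMap k K) f)
        = MvPolynomial.map (algebraMap k K) (D f))
    (n : ℕ) (f : MvPolynomial (Fin 3) K) :
    Pmap p ((⇑D')^[n] f) = (⇑D)^[n] (Pmap p f) := by
  induction n generalizing f with
  | zero => rfl
  | succ n ih =>
    rw [Function.iterate_succ_apply, Function.iterate_succ_apply, ih,
      Pmap_derivation p D D' hD']

lemma aux_galois_comm
    (D : Derivation k (MvPolynomial (Fin 3) k) (MvPolynomial (Fin 3) k))
    (D' : Derivation K (MvPolynomial (Fin 3) K) (MvPolynomial (Fin 3) K))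
    (hD' : ∀ f : MvPolynomial (Fin 3) k,
      D' (MvPolynomial.map (algebraMap k K) f) = MvPolynomial.map (algebraMap k K) (D f))
    (σ : K ≃ₐ[k] K) (f : MvPolynomial (Fin 3) K) :
    MvPolynomial.map (σ : K →+* K) (D' f) = D' (MvPolynomial.map (σ : K →+* K) f) := by
  induction f using MvPolynomial.induction_on with
  | C c =>
    have h1 : D' (C c) = 0 := by
      have := D'.map_algebraMap c
      rwa [MvPolynomial.algebraMap_eq] at this
    have h2 : D' (C (σ c)) = 0 := by
      have := D'.map_algebraMap (σ c)
      rwa [MvPolynomial.algebraMap_eq] at this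
    rw [h1, MvPolynomial.map_C, map_zero]
    exact h2.symm
  | add f g hf hg => rw [map_add, map_add, map_add, map_add, hf, hg]
  | mul_X f i hf =>
    have hX : D' (X i) = MvPolynomial.map (algebraMap k K) (D (X i)) := by
      rw [← hD', MvPolynomial.map_X]
    have hfix : MvPolynomial.map (σ : K →+* K) (MvPolynomial.map (algebraMap k K) (D (X i)))
        = MvPolynomial.map (algebraMap k K) (D (X i)) := by
      rw [MvPolynomial.map_map]
      congr 1
      ext x
      · simp
      · simp [MvPolynomial.map_X]
    rw [D'.leibniz, smul_eq_mul, smul_eq_mul, map_add, map_mul, map_mul,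
      MvPolynomial.map_X, hf, hX, hfix, ← hX]
    rw [map_mul, MvPolynomial.map_X, D'.leibniz, smul_eq_mul, smul_eq_mul]

lemma aux_galois_iter
    (D : Derivation k (MvPolynomial (Fin 3) k) (MvPolynomial (Fin 3) k))
    (D' : Derivation K (MvPolynomial (Fin 3) K) (MvPolynomial (Fin 3) K))
    (hD' : ∀ f : MvPolynomial (Fin 3) k,
      D' (MvPolynomial.map (algebraMap k K) f) = MvPolynomial.map (algebraMap k K) (D f))
    (σ : K ≃ₐ[k] K) (n : ℕ) (f : MvPolynomial (Fin 3) K) :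
    MvPolynomial.map (σ : K →+* K) ((⇑D')^[n] f)
      = (⇑D')^[n] (MvPolynomial.map (σ : K →+* K) f) := by
  induction n generalizing f with
  | zero => rfl
  | succ n ih =>
    rw [Function.iterate_succ_apply', Function.iterate_succ_apply',
      aux_galois_comm D D' hD' σ, ih]

lemma aux_iter_comm
    (D : Derivation k (MvPolynomial (Fin 3) k) (MvPolynomial (Fin 3) k))
    (D' : Derivation K (MvPolynomial (Fin 3) K) (MvPolynomial (Fin 3) K))
    (hD' : ∀ f : MvPolynomial (Fin 3) k,
      D' (MvPolynomial.map (algebraMap k K) f) = MvPolynomial.map (algebraMap k K) (D f))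
    (n : ℕ) (f : MvPolynomial (Fin 3) k) :
    (⇑D')^[n] (MvPolynomial.map (algebraMap k K) f)
      = MvPolynomial.map (algebraMap k K) ((⇑D)^[n] f) := by
  induction n generalizing f with
  | zero => rfl
  | succ n ih =>
    rw [Function.iterate_succ_apply, Function.iterate_succ_apply, hD', ih]

lemma aux_pow_mul {R A : Type*} [CommRing R] [CommRing A] [Algebra R A]
    (D : Derivation R A A) (c : A) (hc : D c = 0) (n : ℕ) (y : A) :
    (⇑D)^[n] (c * y) = c * (⇑D)^[n] y := by
  induction n generalizing y with
  | zero => rfl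
  | succ n ih =>
    rw [Function.iterate_succ_apply, Function.iterate_succ_apply]
    rw [D.leibniz, hc, smul_eq_mul, smul_eq_mul, mul_zero, add_zero, ih]

end AuxP

/-- Descent of principality of image ideals: if the `n`-th image ideal
`Ī_n = D̄^n(B̄) ∩ ker D̄` of the extension `D̄` of `D` to `k̄[X,Y,Z]` is principal
(as an ideal of `ker D̄`), then the `n`-th image ideal `I_n = D^n(B) ∩ ker D`
is principal as an ideal of `ker D`. -/
theorem image_ideal_principal_descends {k : Type*} [Field k] [CharZero k]
    (D : Derivation k (MvPolynomial (Fin 3) k) (MvPolynomial (Fin 3) k))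
    (hD : D ≠ 0) (hlnd : IsLND D)
    (D' : Derivation (AlgebraicClosure k)
        (MvPolynomial (Fin 3) (AlgebraicClosure k))
        (MvPolynomial (Fin 3) (AlgebraicClosure k)))
    (hD' : ∀ f : MvPolynomial (Fin 3) k,
      D' (MvPolynomial.map (algebraMap k (AlgebraicClosure k)) f)
        = MvPolynomial.map (algebraMap k (AlgebraicClosure k)) (D f))
    (n : ℕ)
    (hprinc : ∃ a : MvPolynomial (Fin 3) (AlgebraicClosure k), D' a = 0 ∧
      {x | (∃ b, (⇑D')^[n] b = x) ∧ D' x = 0}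
        = {x | ∃ c, D' c = 0 ∧ x = a * c}) :
    ∃ a : MvPolynomial (Fin 3) k, D a = 0 ∧
      {x | (∃ b, (⇑D)^[n] b = x) ∧ D x = 0}
        = {x | ∃ c, D c = 0 ∧ x = a * c} := by

  classical
  obtain ⟨abar, habar_ker, hset⟩ := hprinc
  have hφinj : Function.Injective
      (MvPolynomial.map (algebraMap k (AlgebraicClosure k)) :
        MvPolynomial (Fin 3) k →+* MvPolynomial (Fin 3) (AlgebraicClosure k)) :=
    MvPolynomial.map_injective _ (algebraMap k (AlgebraicClosure k)).injective
  -- membership transfer from k to the closure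
  have hmem : ∀ x : MvPolynomial (Fin 3) k,
      ((∃ b, (⇑D)^[n] b = x) ∧ D x = 0) →
      MvPolynomial.map (algebraMap k (AlgebraicClosure k)) x
        ∈ {x | (∃ b, (⇑D')^[n] b = x) ∧ D' x = 0} := by
    rintro x ⟨⟨b, hb⟩, hx⟩
    refine ⟨⟨MvPolynomial.map (algebraMap k (AlgebraicClosure k)) b, ?_⟩, ?_⟩
    · rw [aux_iter_comm D D' hD', hb]
    · rw [hD', hx, map_zero]
  by_cases habar : abar = 0
  · -- degenerate case : the ideal is zero
    subst habar
    refine ⟨0, map_zero D, ?_⟩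
    ext x
    simp only [Set.mem_setOf_eq]
    constructor
    · rintro ⟨⟨b, hb⟩, hx⟩
      have h1 := hmem x ⟨⟨b, hb⟩, hx⟩
      rw [hset] at h1
      obtain ⟨c, _, hxc⟩ := h1
      rw [zero_mul] at hxc
      have hx0 : x = 0 := hφinj (by rw [hxc, map_zero])
      exact ⟨0, map_zero D, by rw [hx0, zero_mul]⟩
    · rintro ⟨c, hc, rfl⟩
      rw [zero_mul]
      exact ⟨⟨0, Function.iterate_fixed (map_zero D) n⟩, map_zero D⟩
  · -- main case
    obtain ⟨m₀, hm₀⟩ := MvPolynomial.ne_zero_iff.mp habar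
    set lam0 := MvPolynomial.coeff m₀ abar with hlam0def
    have hlam0 : lam0 ≠ 0 := hm₀
    -- abar belongs to the image ideal
    have habar_mem : abar ∈ {x | (∃ b, (⇑D')^[n] b = x) ∧ D' x = 0} := by
      rw [hset]
      exact ⟨1, Derivation.map_one_eq_zero D', (mul_one abar).symm⟩
    -- Galois : every coefficient, normalized by lam0, is fixed
    have hfix : ∀ (σ : AlgebraicClosure k ≃ₐ[k] AlgebraicClosure k) (m : (Fin 3) →₀ ℕ),
        σ (lam0⁻¹ * MvPolynomial.coeff m abar) = lam0⁻¹ * MvPolynomial.coeff m abar := by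
      intro σ m
      -- image of abar under σ is in the ideal
      have hσmem : MvPolynomial.map (σ : AlgebraicClosure k →+* AlgebraicClosure k) abar
          ∈ {x | (∃ b, (⇑D')^[n] b = x) ∧ D' x = 0} := by
        obtain ⟨⟨b1, hb1⟩, _⟩ := habar_mem
        refine ⟨⟨MvPolynomial.map (σ : AlgebraicClosure k →+* AlgebraicClosure k) b1, ?_⟩, ?_⟩
        · rw [← aux_galois_iter D D' hD' σ, hb1]
        · rw [← aux_galois_comm D D' hD' σ, habar_ker, map_zero]
      rw [hset] at hσmem
      obtain ⟨c1, hc1, hc1e⟩ := hσmem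
      have hσsmem : MvPolynomial.map ((σ.symm : AlgebraicClosure k ≃ₐ[k] AlgebraicClosure k)
            : AlgebraicClosure k →+* AlgebraicClosure k) abar
          ∈ {x | (∃ b, (⇑D')^[n] b = x) ∧ D' x = 0} := by
        obtain ⟨⟨b1, hb1⟩, _⟩ := habar_mem
        refine ⟨⟨MvPolynomial.map (σ.symm : AlgebraicClosure k →+* AlgebraicClosure k) b1, ?_⟩, ?_⟩
        · rw [← aux_galois_iter D D' hD' σ.symm, hb1]
        · rw [← aux_galois_comm D D' hD' σ.symm, habar_ker, map_zero]
      rw [hset] at hσsmem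
      obtain ⟨c2, hc2, hc2e⟩ := hσsmem
      -- composing back
      have hback : MvPolynomial.map (σ : AlgebraicClosure k →+* AlgebraicClosure k)
          (MvPolynomial.map (σ.symm : AlgebraicClosure k →+* AlgebraicClosure k) abar) = abar := by
        rw [MvPolynomial.map_map]
        have : ((σ : AlgebraicClosure k →+* AlgebraicClosure k).comp
            (σ.symm : AlgebraicClosure k →+* AlgebraicClosure k))
            = RingHom.id (AlgebraicClosure k) := by
          ext x
          exact σ.apply_symm_apply x
        rw [this, MvPolynomial.map_id]
      have hcancel : c1 * MvPolynomial.map (σ : AlgebraicClosure k →+* AlgebraicClosure k) c2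
          = 1 := by
        apply mul_left_cancel₀ habar
        rw [mul_one]
        conv_rhs => rw [← hback, hc2e]
        rw [map_mul, hc1e]
        ring
      obtain ⟨u, hu⟩ := aux_eq_C_of_unit c1 _ hcancel
      -- coefficientwise description
      have hcoeffs : ∀ m' : (Fin 3) →₀ ℕ,
          σ (MvPolynomial.coeff m' abar) = MvPolynomial.coeff m' abar * u := by
        intro m'
        have := congrArg (MvPolynomial.coeff m') hc1e
        rw [MvPolynomial.coeff_map, hu, mul_comm abar, MvPolynomial.coeff_C_mul] at this
        exact this.trans (mul_comm u _)
      have hu0 : u ≠ 0 := by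
        intro h0
        apply hlam0
        have := hcoeffs m₀
        rw [h0, mul_zero] at this
        exact σ.injective (this.trans (map_zero σ).symm)
      have hlamu : σ lam0 = lam0 * u := hcoeffs m₀
      rw [map_mul, map_inv₀, hlamu, hcoeffs m]
      field_simp
    -- descend the coefficients
    have hex : ∀ m : (Fin 3) →₀ ℕ, ∃ c : k,
        algebraMap k (AlgebraicClosure k) c = lam0⁻¹ * MvPolynomial.coeff m abar :=
      fun m => aux_fixed_mem_range _ (fun σ => hfix σ m)
    choose cf hcf using hex
    set a : MvPolynomial (Fin 3) k :=
      ∑ m ∈ abar.support, MvPolynomial.monomial m (cf m) with hadef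
    have hφa : MvPolynomial.map (algebraMap k (AlgebraicClosure k)) a
        = MvPolynomial.C lam0⁻¹ * abar := by
      apply MvPolynomial.ext
      intro m
      rw [MvPolynomial.coeff_map, MvPolynomial.coeff_C_mul, hadef, aux_coeff_sum_monomial]
      by_cases h : m ∈ abar.support
      · simp only [h, if_true]
        exact hcf m
      · simp only [h, if_false, map_zero]
        rw [MvPolynomial.notMem_support_iff.mp h, mul_zero]
    -- the retraction
    obtain ⟨p, hp⟩ := (Algebra.linearMap k (AlgebraicClosure k)).exists_leftInverse_of_injective
      (LinearMap.ker_eq_bot.mpr (algebraMap k (AlgebraicClosure k)).injective)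
    have hpc : ∀ c : k, p (algebraMap k (AlgebraicClosure k) c) = c := fun c =>
      LinearMap.congr_fun hp c
    -- D a = 0
    have hφa_ker : D' (MvPolynomial.map (algebraMap k (AlgebraicClosure k)) a) = 0 := by
      rw [hφa, ← MvPolynomial.smul_eq_C_mul, Derivation.map_smul, habar_ker, smul_zero]
    have hDa : D a = 0 := hφinj (by rw [← hD', hφa_ker, map_zero])
    -- a is in the image of D^n
    have hφa_mem : MvPolynomial.map (algebraMap k (AlgebraicClosure k)) a
        ∈ {x | (∃ b, (⇑D')^[n] b = x) ∧ D' x = 0} := by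
      rw [hset]
      refine ⟨MvPolynomial.C lam0⁻¹, ?_, by rw [hφa, mul_comm]⟩
      have := D'.map_algebraMap lam0⁻¹
      rwa [MvPolynomial.algebraMap_eq] at this
    obtain ⟨⟨bbar, hbbar⟩, _⟩ := hφa_mem
    have ha_im : (⇑D)^[n] (Pmap p bbar) = a := by
      have h1 : Pmap p (MvPolynomial.map (algebraMap k (AlgebraicClosure k)) a) = a :=
        Pmap_map p hpc a
      rw [← hbbar, Pmap_derivation_iter p D D' hD'] at h1
      exact h1
    have ha0 : a ≠ 0 := by
      intro h0
      apply habar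
      have : MvPolynomial.C (lam0⁻¹) * abar = 0 := by rw [← hφa, h0, map_zero]
      rcases mul_eq_zero.mp this with h | h
      · exact absurd (by rwa [MvPolynomial.C_eq_zero] at h) (inv_ne_zero hlam0)
      · exact h
    refine ⟨a, hDa, ?_⟩
    ext x
    simp only [Set.mem_setOf_eq]
    constructor
    · rintro ⟨⟨b, hb⟩, hx⟩
      have h1 := hmem x ⟨⟨b, hb⟩, hx⟩
      rw [hset] at h1
      obtain ⟨cbar, hcbar, hxc⟩ := h1
      have hxa : MvPolynomial.map (algebraMap k (AlgebraicClosure k)) x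
          = MvPolynomial.map (algebraMap k (AlgebraicClosure k)) a
            * (MvPolynomial.C lam0 * cbar) := by
        rw [hφa, hxc]
        rw [show MvPolynomial.C lam0⁻¹ * abar * (MvPolynomial.C lam0 * cbar)
          = (MvPolynomial.C lam0⁻¹ * MvPolynomial.C lam0) * (abar * cbar) by ring]
        rw [← map_mul, inv_mul_cancel₀ hlam0, map_one, one_mul]
      have hxq : x = a * Pmap p (MvPolynomial.C lam0 * cbar) := by
        have := Pmap_map p hpc x
        rw [hxa, Pmap_mul_map] at this
        exact this.symm
      refine ⟨Pmap p (MvPolynomial.C lam0 * cbar), ?_, hxq⟩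
      have hDq : a * D (Pmap p (MvPolynomial.C lam0 * cbar)) = 0 := by
        have := hx
        rw [hxq, D.leibniz, hDa, smul_eq_mul, smul_eq_mul, mul_zero, add_zero] at this
        exact this
      rcases mul_eq_zero.mp hDq with h | h
      · exact absurd h ha0
      · exact h
    · rintro ⟨c, hc, rfl⟩
      refine ⟨⟨c * Pmap p bbar, ?_⟩, ?_⟩
      · rw [aux_pow_mul D c hc, ha_im, mul_comm]
      · rw [D.leibniz, hc, hDa, smul_zero, smul_zero, add_zero]
end

section
/- Let k be a field of characteristic zero, B = k[X,Y,Z], D a nonzero locally nilpotent derivation on B, A = ker(D), r a local slice with D(r) = f ∈ A \ {0}. Let M₀ be an A-submodule of B with Σ_{i=0}^n A·r^i ⊆ M₀ ⊆ F_n, where F_n = {b ∈ B : deg_D(b) ≤ n}. If fB ∩ M₀ = fM₀, then F_n = M₀. -/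
open MvPolynomial

/-!
If `D^[m+1] b = 0`, then `D b` has `D`-degree below `m`, so inductively `fᴺ · D b = Σ_{i<m} aᵢ rⁱ`
with `aᵢ ∈ ker D`. Integrating in `r` (dividing by `i + 1` needs characteristic zero),
`g = Σ aᵢ rⁱ⁺¹ / (i + 1)` satisfies `D g = D (fᴺ⁺¹ b)`, so `fᴺ⁺¹ b - g ∈ ker D` and
`fᴺ⁺¹ b ∈ Σ_{i ≤ m} A rⁱ`. Hence every `b ∈ F_n` has a multiple `fᴺ b` in `M₀`, and since `f` is a
nonzerodivisor, `fB ∩ M₀ = fM₀` removes the factors of `f` one at a time.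
-/

section Integration

variable {k B : Type*} [Field k] [CharZero k] [CommRing B] [Algebra k B]
  (D : Derivation k B B) {r : B}

theorem Derivation.map_inv_smul_mul_pow_succ {a : B} (ha : D a = 0) (i : ℕ) :
    D (((i + 1 : ℕ) : k)⁻¹ • (a * r ^ (i + 1))) = a * r ^ i * D r := by
  rw [Derivation.map_smul, Derivation.leibniz, ha, smul_zero, add_zero,
    Derivation.leibniz_pow, Nat.add_sub_cancel, ← Nat.cast_smul_eq_nsmul k, smul_eq_mul a,
    smul_eq_mul (r ^ i), mul_smul_comm, smul_smul,
    inv_mul_cancel₀ (Nat.cast_ne_zero.mpr i.succ_ne_zero), one_smul, mul_assoc]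

theorem Derivation.map_sum_inv_smul_mul_pow_succ {a : ℕ → B} (ha : ∀ i, D (a i) = 0) (m : ℕ) :
    D (∑ i ∈ Finset.range m, ((i + 1 : ℕ) : k)⁻¹ • (a i * r ^ (i + 1))) =
      (∑ i ∈ Finset.range m, a i * r ^ i) * D r := by
  simp only [map_sum, D.map_inv_smul_mul_pow_succ (ha _), Finset.sum_mul]

theorem Derivation.exists_pow_mul_eq_sum_mul_pow (hr : D (D r) = 0) (m : ℕ) {b : B}
    (hb : (⇑D)^[m + 1] b = 0) :
    ∃ (N : ℕ) (a : ℕ → B), (∀ i, D (a i) = 0) ∧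
      D r ^ N * b = ∑ i ∈ Finset.range (m + 1), a i * r ^ i := by
  induction m generalizing b with
  | zero => exact ⟨0, fun _ => b, fun _ => by simpa using hb, by simp⟩
  | succ m ih =>
    obtain ⟨N, a, ha, hDb⟩ := ih (b := D b) (by rwa [← Function.iterate_succ_apply])
    set g := ∑ i ∈ Finset.range (m + 1), ((i + 1 : ℕ) : k)⁻¹ • (a i * r ^ (i + 1))
    have hDg : D g = D (D r ^ (N + 1) * b) := by
      rw [D.map_sum_inv_smul_mul_pow_succ ha, ← hDb, Derivation.leibniz, Derivation.leibniz_pow,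
        hr]
      simp only [smul_eq_mul]
      ring
    have ha₀ : D (D r ^ (N + 1) * b - g) = 0 := by rw [map_sub, hDg, sub_self]
    refine ⟨N + 1, fun j => Nat.casesOn j (D r ^ (N + 1) * b - g)
      fun i => ((i + 1 : ℕ) : k)⁻¹ • a i, fun j => ?_, ?_⟩
    · cases j with
      | zero => exact ha₀
      | succ i => simp [ha i]
    · simp only [Finset.sum_range_succ' _ (m + 1), smul_mul_assoc, pow_zero, mul_one]
      exact (add_sub_cancel g _).symm

end Integration

theorem mem_of_pow_mul_mem {B : Type*} [CommMonoid B] {f : B} (hf : IsLeftRegular f)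
    {M : Set B} (hsat : ∀ x ∈ M, (∃ b, x = f * b) → ∃ y ∈ M, x = f * y) :
    ∀ (N : ℕ) {x : B}, f ^ N * x ∈ M → x ∈ M
  | 0, x, hx => by simpa using hx
  | N + 1, x, hx => by
    obtain ⟨y, hy, hxy⟩ := hsat _ hx ⟨f ^ N * x, by rw [pow_succ', mul_assoc]⟩
    have : f ^ N * x = y := hf (show f * (f ^ N * x) = f * y by rw [← hxy, pow_succ', mul_assoc])
    exact mem_of_pow_mul_mem hf hsat N (this ▸ hy)

theorem degree_module_criterion_general {k : Type*} [Field k] [CharZero k]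
    (D : Derivation k (MvPolynomial (Fin 3) k) (MvPolynomial (Fin 3) k))
    (r f : MvPolynomial (Fin 3) k) (hrf : D r = f) (hf0 : f ≠ 0) (hfA : D f = 0)
    (n : ℕ) (M₀ : Set (MvPolynomial (Fin 3) k))
    (hadd : ∀ x ∈ M₀, ∀ y ∈ M₀, x + y ∈ M₀)
    (hlow : ∀ (a : MvPolynomial (Fin 3) k), D a = 0 → ∀ i ≤ n, a * r ^ i ∈ M₀)
    (hup : ∀ x ∈ M₀, (⇑D)^[n + 1] x = 0)
    (hsat : ∀ x ∈ M₀, (∃ b, x = f * b) → ∃ y ∈ M₀, x = f * y) :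
    {b : MvPolynomial (Fin 3) k | (⇑D)^[n + 1] b = 0} = M₀ := by
  subst hrf
  refine Set.Subset.antisymm (fun b hb => ?_) hup
  obtain ⟨N, a, ha, hrep⟩ := D.exists_pow_mul_eq_sum_mul_pow hfA n hb
  have hzero : (0 : MvPolynomial (Fin 3) k) ∈ M₀ := by simpa using hlow 0 D.map_zero 0 n.zero_le
  have hpow : D r ^ N * b ∈ M₀ := by
    rw [hrep]
    refine Finset.sum_induction _ (· ∈ M₀) (fun x y hx hy => hadd x hx y hy) hzero fun i hi => ?_
    exact hlow (a i) (ha i) i (Nat.lt_succ_iff.mp (Finset.mem_range.mp hi))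
  exact mem_of_pow_mul_mem (IsRegular.of_ne_zero hf0).left hsat N hpow

/-- Freudenburg's degree-module criterion (case `s = 0`): let `r` be a local slice
with `D r = f ∈ A \ {0}` (`A = ker D`), and let `M₀` be an `A`-submodule of `B`
with `Σ_{i=0}^n A r^i ⊆ M₀ ⊆ F_n`.  If `f B ∩ M₀ = f M₀`, then `F_n = M₀`. -/
theorem degree_module_criterion {k : Type*} [Field k] [CharZero k]
    (D : Derivation k (MvPolynomial (Fin 3) k) (MvPolynomial (Fin 3) k))
    (hD : D ≠ 0) (hlnd : IsLND D)
    (r f : MvPolynomial (Fin 3) k) (hrf : D r = f) (hf0 : f ≠ 0) (hfA : D f = 0)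
    (n : ℕ) (M₀ : Set (MvPolynomial (Fin 3) k))
    (hadd : ∀ x ∈ M₀, ∀ y ∈ M₀, x + y ∈ M₀)
    (hsmul : ∀ (a : MvPolynomial (Fin 3) k), D a = 0 → ∀ x ∈ M₀, a * x ∈ M₀)
    (hlow : ∀ (a : MvPolynomial (Fin 3) k), D a = 0 → ∀ i ≤ n, a * r ^ i ∈ M₀)
    (hup : ∀ x ∈ M₀, (⇑D)^[n + 1] x = 0)
    (hsat : ∀ x ∈ M₀, (∃ b, x = f * b) → ∃ y ∈ M₀, x = f * y) :
    {b : MvPolynomial (Fin 3) k | (⇑D)^[n + 1] b = 0} = M₀ :=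
  degree_module_criterion_general D r f hrf hf0 hfA n M₀ hadd hlow hup hsat
end
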